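/- arXiv:1507.05295 — 5 statements merged into one kernel-verified Lean document; each statement's English description precedes it below -/
import Mathlib

section
/- Let I ⊆ ℝ be a nonempty interval, M a strict two-variable mean on I, and f : I → ℝ̄. Then f is lower M-convex if and only if the following three conditions hold: f(u) > −∞ for all u ∈ I; f(M(x,y)) < +∞ for all x < y in I; and f(M(x,y)) ≤ ((y−M(x,y))/(y−x))·f(x) + ((M(x,y)−x)/(y−x))·f(y) for all x < y in I (the right-hand side being an unambiguous sum in ℝ̄ since neither summand is −∞). -/
/-- `M` is a two-variable mean on `I` (its values on pairs `x > y` are irrelevant). -/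
def IsMeanOn (I : Set ℝ) (M : ℝ → ℝ → ℝ) : Prop :=
  ∀ x ∈ I, ∀ y ∈ I, x ≤ y → x ≤ M x y ∧ M x y ≤ y

/-- `M` is a strict two-variable mean on `I`. -/
def IsStrictMeanOn (I : Set ℝ) (M : ℝ → ℝ → ℝ) : Prop :=
  IsMeanOn I M ∧ ∀ x ∈ I, ∀ y ∈ I, x < y → x < M x y ∧ M x y < y

/-- The map `φ_{(x,y)}(t₁,…,tₙ) = (M₁(x,t₂), M₂(t₁,t₃), …, Mₙ(t_{n-1},y))`
(0-indexed: `M i` is the paper's `M_{i+1}`). -/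
def phiMap (n : ℕ) (M : Fin n → ℝ → ℝ → ℝ) (x y : ℝ) (t : Fin n → ℝ) : Fin n → ℝ :=
  fun i =>
    M i (if _h : (i : ℕ) = 0 then x else t ⟨(i : ℕ) - 1, by have := i.isLt; omega⟩)
        (if _h : (i : ℕ) = n - 1 then y else t ⟨(i : ℕ) + 1, by have := i.isLt; omega⟩)

/-- The fixed point set `Φ_{(x,y)} = {ξ ∈ [x,y]ⁿ_≤ : φ_{(x,y)}(ξ) = ξ}`. -/
def phiFixedSet (n : ℕ) (M : Fin n → ℝ → ℝ → ℝ) (x y : ℝ) : Set (Fin n → ℝ) :=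
  {t | (∀ i, t i ∈ Set.Icc x y) ∧ Monotone t ∧ phiMap n M x y t = t}

open Classical in
/-- The lower sum `x ∔ y` on the extended reals: `x + y` if both are `> -∞`
(with `(+∞) ∔ (+∞) = +∞`), and `-∞` as soon as one summand is `-∞`. -/
noncomputable def lsum (a b : EReal) : EReal := if a = ⊥ ∨ b = ⊥ then ⊥ else a + b

open Classical in
/-- The upper sum `x ⊎ y` on the extended reals: `x + y` if both are `< +∞`
(with `(-∞) ⊎ (-∞) = -∞`), and `+∞` as soon as one summand is `+∞`. -/
noncomputable def usum (a b : EReal) : EReal := if a = ⊤ ∨ b = ⊤ then ⊤ else a + b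

/-- The lower second-order divided difference `⌊x,y,z;f⌋`. -/
noncomputable def ldd (f : ℝ → EReal) (x y z : ℝ) : EReal :=
  lsum (lsum (((1 / ((y - x) * (z - x)) : ℝ) : EReal) * f x)
             (((1 / ((x - y) * (z - y)) : ℝ) : EReal) * f y))
       (((1 / ((x - z) * (y - z)) : ℝ) : EReal) * f z)

/-- The upper second-order divided difference `⌈x,y,z;f⌉`. -/
noncomputable def udd (f : ℝ → EReal) (x y z : ℝ) : EReal :=
  usum (usum (((1 / ((y - x) * (z - x)) : ℝ) : EReal) * f x)
             (((1 / ((x - y) * (z - y)) : ℝ) : EReal) * f y))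
       (((1 / ((x - z) * (y - z)) : ℝ) : EReal) * f z)

/-- `f : I → ℝ̄` is lower `M`-convex: `⌊x, M(x,y), y; f⌋ ≥ 0` for all `x < y` in `I`. -/
def LowerConvexWrt (I : Set ℝ) (M : ℝ → ℝ → ℝ) (f : ℝ → EReal) : Prop :=
  ∀ x ∈ I, ∀ y ∈ I, x < y → 0 ≤ ldd f x (M x y) y

/-- `f : I → ℝ̄` is upper `M`-convex: `⌈x, M(x,y), y; f⌉ ≥ 0` for all `x < y` in `I`. -/
def UpperConvexWrt (I : Set ℝ) (M : ℝ → ℝ → ℝ) (f : ℝ → EReal) : Prop :=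
  ∀ x ∈ I, ∀ y ∈ I, x < y → 0 ≤ udd f x (M x y) y


private lemma lsum_bot_left (b : EReal) : lsum ⊥ b = ⊥ := by simp [lsum]

private lemma lsum_bot_right (a : EReal) : lsum a ⊥ = ⊥ := by simp [lsum]

private lemma lsum_of_ne {a b : EReal} (ha : a ≠ ⊥) (hb : b ≠ ⊥) : lsum a b = a + b := by
  simp [lsum, ha, hb]

private lemma coe_mul_ne_bot {c : ℝ} (hc : 0 < c) {b : EReal} (hb : b ≠ ⊥) :
    (c : EReal) * b ≠ ⊥ := by
  induction b using EReal.rec with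
  | bot => exact absurd rfl hb
  | coe r => rw [← EReal.coe_mul]; exact EReal.coe_ne_bot _
  | top => rw [EReal.coe_mul_top_of_pos hc]; simp

private lemma real_key {x m y X Z Y : ℝ} (hxm : x < m) (hmy : m < y) :
    (0 ≤ 1/((m-x)*(y-x))*X + 1/((x-m)*(y-m))*Z + 1/((x-y)*(m-y))*Y) ↔
    Z ≤ (y-m)/(y-x)*X + (m-x)/(y-x)*Y := by
  have hxy : x < y := hxm.trans hmy
  have h1 : (0:ℝ) < m - x := by linarith
  have h2 : (0:ℝ) < y - m := by linarith
  have h3 : (0:ℝ) < y - x := by linarith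
  have n1 : m - x ≠ 0 := h1.ne'
  have n2 : y - m ≠ 0 := h2.ne'
  have n3 : y - x ≠ 0 := h3.ne'
  have n4 : x - m ≠ 0 := sub_ne_zero.mpr hxm.ne
  have n5 : m - y ≠ 0 := sub_ne_zero.mpr hmy.ne
  have n6 : x - y ≠ 0 := sub_ne_zero.mpr hxy.ne
  have e1 : 1/((m-x)*(y-x))*X + 1/((x-m)*(y-m))*Z + 1/((x-y)*(m-y))*Y
      = (X*(y-m) + Y*(m-x) - Z*(y-x)) / ((m-x)*(y-m)*(y-x)) := by
    field_simp
    ring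
  have e2 : (y-m)/(y-x)*X + (m-x)/(y-x)*Y = (X*(y-m) + Y*(m-x))/(y-x) := by ring
  rw [e1, e2, le_div_iff₀ (by positivity : (0:ℝ) < (m-x)*(y-m)*(y-x)), le_div_iff₀ h3]
  constructor <;> intro h <;> nlinarith

/-- Characterization of lower `M`-convexity: `f` is lower `M`-convex iff
`f > -∞` on `I`, `f(M(x,y)) < +∞`, and the convexity inequality
`f(M(x,y)) ≤ ((y-M(x,y))/(y-x)) f(x) + ((M(x,y)-x)/(y-x)) f(y)` holds for all `x < y`. -/
theorem stmt12 (I : Set ℝ) (hI : Set.OrdConnected I)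
    (hnd : ∃ a ∈ I, ∃ b ∈ I, a < b)
    (M : ℝ → ℝ → ℝ) (hM : IsStrictMeanOn I M) (f : ℝ → EReal) :
    LowerConvexWrt I M f ↔
      ((∀ u ∈ I, f u ≠ ⊥) ∧
       (∀ x ∈ I, ∀ y ∈ I, x < y → f (M x y) ≠ ⊤) ∧
       (∀ x ∈ I, ∀ y ∈ I, x < y →
         f (M x y) ≤ (((y - M x y) / (y - x) : ℝ) : EReal) * f x +
           (((M x y - x) / (y - x) : ℝ) : EReal) * f y)) := by
  obtain ⟨hMean, hStrict⟩ := hM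
  constructor
  · intro hconv
    have key : ∀ x ∈ I, ∀ y ∈ I, x < y → f x ≠ ⊥ ∧ f y ≠ ⊥ ∧ f (M x y) ≠ ⊤ := by
      intro x hx y hy hxy
      obtain ⟨hxm, hmy⟩ := hStrict x hx y hy hxy
      have hc := hconv x hx y hy hxy
      unfold ldd at hc
      have hc1 : (0:ℝ) < 1 / ((M x y - x) * (y - x)) := by
        have : (0:ℝ) < (M x y - x) * (y - x) := by nlinarith
        positivity
      have hc2 : (1 / ((x - M x y) * (y - M x y)) : ℝ) < 0 := by
        apply div_neg_of_pos_of_neg one_pos; nlinarith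
      have hc3 : (0:ℝ) < 1 / ((x - y) * (M x y - y)) := by
        have : (0:ℝ) < (x - y) * (M x y - y) := by nlinarith
        positivity
      refine ⟨?_, ?_, ?_⟩
      · intro hb
        rw [hb, EReal.coe_mul_bot_of_pos hc1, lsum_bot_left, lsum_bot_left] at hc
        simp at hc
      · intro hb
        rw [hb, EReal.coe_mul_bot_of_pos hc3, lsum_bot_right] at hc
        simp at hc
      · intro ht
        rw [ht, EReal.coe_mul_top_of_neg hc2, lsum_bot_right, lsum_bot_left] at hc
        simp at hc
    have hne : ∀ u ∈ I, f u ≠ ⊥ := by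
      intro u hu
      obtain ⟨a, ha, b, hb, hab⟩ := hnd
      rcases lt_or_ge u b with h | h
      · exact (key u hu b hb h).1
      · exact (key a ha u hu (hab.trans_le h)).2.1
    refine ⟨hne, fun x hx y hy hxy => (key x hx y hy hxy).2.2, ?_⟩
    intro x hx y hy hxy
    obtain ⟨hxm, hmy⟩ := hStrict x hx y hy hxy
    have hmI : M x y ∈ I := hI.out hx hy ⟨hxm.le, hmy.le⟩
    have hfm_bot := hne _ hmI
    have hfm_top := (key x hx y hy hxy).2.2
    have hfx := hne x hx
    have hfy := hne y hy
    have hc := hconv x hx y hy hxy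
    unfold ldd at hc
    have ha' : (0:ℝ) < (y - M x y) / (y - x) := by
      apply div_pos <;> linarith
    have hb' : (0:ℝ) < (M x y - x) / (y - x) := by
      apply div_pos <;> linarith
    lift f (M x y) to ℝ using ⟨hfm_top, hfm_bot⟩ with Z hZ
    rcases eq_or_ne (f x) ⊤ with hfxT | hfxT
    · rw [hfxT, EReal.coe_mul_top_of_pos ha',
        EReal.top_add_of_ne_bot (coe_mul_ne_bot hb' hfy)]
      exact le_top
    lift f x to ℝ using ⟨hfxT, hfx⟩ with X hX
    rcases eq_or_ne (f y) ⊤ with hfyT | hfyT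
    · rw [hfyT, EReal.coe_mul_top_of_pos hb', add_comm,
        EReal.top_add_of_ne_bot (by rw [← EReal.coe_mul]; exact EReal.coe_ne_bot _)]
      exact le_top
    lift f y to ℝ using ⟨hfyT, hfy⟩ with Y hY
    rw [← EReal.coe_mul, ← EReal.coe_mul, ← EReal.coe_mul,
      lsum_of_ne (EReal.coe_ne_bot _) (EReal.coe_ne_bot _), ← EReal.coe_add,
      lsum_of_ne (EReal.coe_ne_bot _) (EReal.coe_ne_bot _), ← EReal.coe_add,
      EReal.coe_nonneg] at hc
    rw [← EReal.coe_mul, ← EReal.coe_mul, ← EReal.coe_add, EReal.coe_le_coe_iff]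
    exact (real_key hxm hmy).mp hc
  · rintro ⟨hne, htop, hineq⟩
    intro x hx y hy hxy
    obtain ⟨hxm, hmy⟩ := hStrict x hx y hy hxy
    have hmI : M x y ∈ I := hI.out hx hy ⟨hxm.le, hmy.le⟩
    have hfx := hne x hx
    have hfy := hne y hy
    have hfm_bot := hne _ hmI
    have hfm_top := htop x hx y hy hxy
    have hq := hineq x hx y hy hxy
    unfold ldd
    have hc1 : (0:ℝ) < 1 / ((M x y - x) * (y - x)) := by
      have : (0:ℝ) < (M x y - x) * (y - x) := by nlinarith
      positivity
    have hc3 : (0:ℝ) < 1 / ((x - y) * (M x y - y)) := by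
      have : (0:ℝ) < (x - y) * (M x y - y) := by nlinarith
      positivity
    lift f (M x y) to ℝ using ⟨hfm_top, hfm_bot⟩ with Z hZ
    rcases eq_or_ne (f x) ⊤ with hfxT | hfxT
    · rw [hfxT, EReal.coe_mul_top_of_pos hc1, ← EReal.coe_mul,
        lsum_of_ne (by simp) (EReal.coe_ne_bot _),
        EReal.top_add_of_ne_bot (EReal.coe_ne_bot _),
        lsum_of_ne (by simp) (coe_mul_ne_bot hc3 hfy),
        EReal.top_add_of_ne_bot (coe_mul_ne_bot hc3 hfy)]
      exact le_top
    lift f x to ℝ using ⟨hfxT, hfx⟩ with X hX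
    rcases eq_or_ne (f y) ⊤ with hfyT | hfyT
    · rw [hfyT, EReal.coe_mul_top_of_pos hc3, ← EReal.coe_mul, ← EReal.coe_mul,
        lsum_of_ne (EReal.coe_ne_bot _) (EReal.coe_ne_bot _), ← EReal.coe_add,
        lsum_of_ne (EReal.coe_ne_bot _) (by simp), add_comm,
        EReal.top_add_of_ne_bot (EReal.coe_ne_bot _)]
      exact le_top
    lift f y to ℝ using ⟨hfyT, hfy⟩ with Y hY
    rw [← EReal.coe_mul, ← EReal.coe_mul, ← EReal.coe_mul,
      lsum_of_ne (EReal.coe_ne_bot _) (EReal.coe_ne_bot _), ← EReal.coe_add,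
      lsum_of_ne (EReal.coe_ne_bot _) (EReal.coe_ne_bot _), ← EReal.coe_add,
      EReal.coe_nonneg]
    rw [← EReal.coe_mul, ← EReal.coe_mul, ← EReal.coe_add, EReal.coe_le_coe_iff] at hq
    exact (real_key hxm hmy).mpr hq
end

section
/- Define ℚ₀ := {2k/(2n−1) : k ∈ ℤ, n ∈ ℕ} and ℚ₁ := {(2k−1)/(2n−1) : k ∈ ℤ, n ∈ ℕ}. Then ℚ₀ and ℚ₁ are disjoint subsets of ℚ satisfying ℚ₀+ℚ₀ ⊆ ℚ₀, ℚ₀+ℚ₁ ⊆ ℚ₁, ℚ₁+ℚ₁ ⊆ ℚ₀, ℚ₀·ℚ₀ ⊆ ℚ₀, ℚ₀·ℚ₁ ⊆ ℚ₀ and ℚ₁·ℚ₁ ⊆ ℚ₁. Moreover, let I ⊆ ℝ be an interval such that a := sup I belongs to I ∩ ℚ₁, let h : I → ℝ be any convex function, and define f : I → ℝ̄ by f(x) := h(x) if x ∈ (I ∩ ℚ₀) ∪ {a} and f(x) := +∞ otherwise. Then for every t ∈ (0,1) ∩ ℚ₁, the function f is upper A_t-convex but is not upper A_{1−t}-convex.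 -/
/-- The set `ℚ₀ = {2k/(2n-1) : k ∈ ℤ, n ∈ ℕ}` (as a subset of `ℝ`). -/
def Qzero : Set ℝ :=
  {x | ∃ k : ℤ, ∃ n : ℕ, 1 ≤ n ∧ x = (2 * (k : ℝ)) / (2 * (n : ℝ) - 1)}

/-- The set `ℚ₁ = {(2k-1)/(2n-1) : k ∈ ℤ, n ∈ ℕ}` (as a subset of `ℝ`). -/
def Qone : Set ℝ :=
  {x | ∃ k : ℤ, ∃ n : ℕ, 1 ≤ n ∧ x = (2 * (k : ℝ) - 1) / (2 * (n : ℝ) - 1)}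

open Set

section UpperDividedDifference

variable {f : ℝ → EReal} {x m y : ℝ}

lemma usum_coe_coe (u v : ℝ) : usum u v = ((u + v : ℝ) : EReal) := by
  simp [usum]

lemma usum_top_left (b : EReal) : usum ⊤ b = ⊤ := by simp [usum]

lemma usum_top_right (a : EReal) : usum a ⊤ = ⊤ := by simp [usum]

lemma usum_coe_bot (u : ℝ) : usum u ⊥ = ⊥ := by simp [usum]

lemma usum_bot_coe (u : ℝ) : usum ⊥ u = ⊥ := by simp [usum]

lemma udd_eq_top_of_left (hxm : x < m) (hmy : m < y) (hx : f x = ⊤) : udd f x m y = ⊤ := by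
  have hc : (0 : ℝ) < 1 / ((m - x) * (y - x)) := by
    apply one_div_pos.2; nlinarith
  rw [udd, hx, EReal.coe_mul_top_of_pos hc, usum_top_left, usum_top_left]

lemma udd_eq_top_of_right (hxm : x < m) (hmy : m < y) (hy : f y = ⊤) : udd f x m y = ⊤ := by
  have hc : (0 : ℝ) < 1 / ((x - y) * (m - y)) := by
    apply one_div_pos.2; nlinarith
  rw [udd, hy, EReal.coe_mul_top_of_pos hc, usum_top_right]

lemma udd_eq_bot_of_middle (hxm : x < m) (hmy : m < y) {u w : ℝ} (hx : f x = u)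
    (hm : f m = ⊤) (hy : f y = w) : udd f x m y = ⊥ := by
  have hc : 1 / ((x - m) * (y - m)) < (0 : ℝ) := by
    apply one_div_neg.2; nlinarith
  rw [udd, hx, hm, hy, EReal.coe_mul_top_of_neg hc, ← EReal.coe_mul, ← EReal.coe_mul,
    usum_coe_bot, usum_bot_coe]

lemma udd_eq_coe_slope (hxm : x < m) (hmy : m < y) {u v w : ℝ} (hx : f x = u) (hm : f m = v)
    (hy : f y = w) :
    udd f x m y = (((w - v) / (y - m) - (v - u) / (m - x)) / (y - x) : ℝ) := by
  rw [udd, hx, hm, hy, ← EReal.coe_mul, ← EReal.coe_mul, ← EReal.coe_mul, usum_coe_coe,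
    usum_coe_coe]
  have h₁ : m - x ≠ 0 := sub_ne_zero.2 hxm.ne'
  have h₂ : y - m ≠ 0 := sub_ne_zero.2 hmy.ne'
  have h₃ : y - x ≠ 0 := sub_ne_zero.2 (hxm.trans hmy).ne'
  have h₄ : x - m ≠ 0 := sub_ne_zero.2 hxm.ne
  have h₅ : x - y ≠ 0 := sub_ne_zero.2 (hxm.trans hmy).ne
  have h₆ : m - y ≠ 0 := sub_ne_zero.2 hmy.ne
  congr 1
  field_simp
  ring

end UpperDividedDifference

section ExtendedByTop

variable {I S : Set ℝ} [DecidablePred (· ∈ S)] {M : ℝ → ℝ → ℝ} {g : ℝ → ℝ} {f : ℝ → EReal}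

theorem upperConvexWrt_of_convexOn (hI : I.OrdConnected) (hg : ConvexOn ℝ I g)
    (hM : ∀ x y, x < y → M x y ∈ Ioo x y)
    (hS : ∀ x ∈ I ∩ S, ∀ y ∈ I ∩ S, x < y → M x y ∈ S)
    (hf : ∀ x ∈ I, f x = if x ∈ S then (g x : EReal) else ⊤) :
    UpperConvexWrt I M f := by
  intro x hx y hy hxy
  obtain ⟨hxm, hmy⟩ := hM x y hxy
  by_cases hxS : x ∈ S
  · by_cases hyS : y ∈ S
    · have hmI : M x y ∈ I := hI.out hx hy ⟨hxm.le, hmy.le⟩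
      have hmS := hS x ⟨hx, hxS⟩ y ⟨hy, hyS⟩ hxy
      rw [udd_eq_coe_slope hxm hmy (by rw [hf x hx, if_pos hxS]) (by rw [hf _ hmI, if_pos hmS])
        (by rw [hf y hy, if_pos hyS])]
      exact EReal.coe_nonneg.2 <| div_nonneg
        (sub_nonneg.2 (hg.slope_mono_adjacent hx hy hxm hmy)) (sub_pos.2 hxy).le
    · rw [udd_eq_top_of_right hxm hmy (by rw [hf y hy, if_neg hyS])]
      exact le_top
  · rw [udd_eq_top_of_left hxm hmy (by rw [hf x hx, if_neg hxS])]
    exact le_top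

theorem not_upperConvexWrt_of_not_mem (hI : I.OrdConnected)
    (hf : ∀ x ∈ I, f x = if x ∈ S then (g x : EReal) else ⊤) {x y : ℝ}
    (hx : x ∈ I ∩ S) (hy : y ∈ I ∩ S) (hxy : x < y) (hM : M x y ∈ Ioo x y) (hmS : M x y ∉ S) :
    ¬ UpperConvexWrt I M f := by
  intro hconv
  have hmI : M x y ∈ I := hI.out hx.1 hy.1 ⟨hM.1.le, hM.2.le⟩
  have hbot := udd_eq_bot_of_middle (f := f) hM.1 hM.2 (by rw [hf x hx.1, if_pos hx.2])
    (by rw [hf _ hmI, if_neg hmS]) (by rw [hf y hy.1, if_pos hy.2])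
  exact absurd (hbot ▸ hconv x hx.1 y hy.1 hxy) (by simp)

end ExtendedByTop

lemma mul_add_mul_mem_Ioo {s u x y : ℝ} (hs : 0 < s) (hu : 0 < u) (hsu : s + u = 1)
    (hxy : x < y) : s * x + u * y ∈ Ioo x y :=
  (openSegment_eq_Ioo hxy).subset ⟨s, u, hs, hu, hsu, rfl⟩

section OddDenominators

lemma intCast_ne_zero_of_odd {q : ℤ} (hq : Odd q) : (q : ℝ) ≠ 0 :=
  Int.cast_ne_zero.2 (Int.natAbs_pos.1 (Int.natAbs_odd.2 hq).pos)

lemma exists_div_two_mul_sub_one {p q : ℤ} (hq : Odd q) :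
    ∃ r : ℤ, ∃ n : ℕ, 1 ≤ n ∧ (r = p ∨ r = -p) ∧ (p / q : ℝ) = r / (2 * n - 1) := by
  obtain ⟨m, hm⟩ := Int.natAbs_odd.2 hq
  rcases Int.natAbs_eq_iff.1 hm with rfl | rfl
  · exact ⟨p, m + 1, by omega, Or.inl rfl, by push_cast; ring⟩
  · exact ⟨-p, m + 1, by omega, Or.inr rfl, by push_cast; rw [div_neg, neg_div]; ring⟩

lemma mem_Qzero_iff {x : ℝ} : x ∈ Qzero ↔ ∃ p q : ℤ, Even p ∧ Odd q ∧ x = p / q := by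
  constructor
  · rintro ⟨k, n, -, rfl⟩
    exact ⟨2 * k, 2 * n - 1, even_two_mul k, ⟨n - 1, by ring⟩, by push_cast; ring⟩
  · rintro ⟨p, q, hp, hq, rfl⟩
    obtain ⟨r, n, hn, hr, hpq⟩ := exists_div_two_mul_sub_one (p := p) hq
    obtain ⟨k, rfl⟩ : Even r := by rcases hr with rfl | rfl; exacts [hp, hp.neg]
    exact ⟨k, n, hn, by rw [hpq]; push_cast; ring⟩

lemma mem_Qone_iff {x : ℝ} : x ∈ Qone ↔ ∃ p q : ℤ, Odd p ∧ Odd q ∧ x = p / q := by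
  constructor
  · rintro ⟨k, n, -, rfl⟩
    exact ⟨2 * k - 1, 2 * n - 1, ⟨k - 1, by ring⟩, ⟨n - 1, by ring⟩, by push_cast; ring⟩
  · rintro ⟨p, q, hp, hq, rfl⟩
    obtain ⟨r, n, hn, hr, hpq⟩ := exists_div_two_mul_sub_one (p := p) hq
    obtain ⟨k, rfl⟩ : Odd r := by rcases hr with rfl | rfl; exacts [hp, hp.neg]
    exact ⟨k + 1, n, hn, by rw [hpq]; push_cast; ring⟩

lemma exists_div_of_mem_Qzero_union_Qone {x : ℝ} (hx : x ∈ Qzero ∪ Qone) :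
    ∃ p q : ℤ, Odd q ∧ x = p / q := by
  rcases hx with hx | hx
  · obtain ⟨p, q, -, hq, rfl⟩ := mem_Qzero_iff.1 hx
    exact ⟨p, q, hq, rfl⟩
  · obtain ⟨p, q, -, hq, rfl⟩ := mem_Qone_iff.1 hx
    exact ⟨p, q, hq, rfl⟩

lemma subset_range_ratCast_of_subset_Qzero_union_Qone {s : Set ℝ} (hs : s ⊆ Qzero ∪ Qone) :
    s ⊆ range ((↑) : ℚ → ℝ) := by
  intro x hx
  obtain ⟨p, q, -, rfl⟩ := exists_div_of_mem_Qzero_union_Qone (hs hx)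
  exact ⟨p / q, by push_cast; rfl⟩

lemma intCast_div_add_intCast_div {p q p' q' : ℤ} (hq : Odd q) (hq' : Odd q') :
    (p / q + p' / q' : ℝ) = ((p * q' + q * p' : ℤ) : ℝ) / (q * q' : ℤ) := by
  rw [div_add_div _ _ (intCast_ne_zero_of_odd hq) (intCast_ne_zero_of_odd hq')]
  push_cast
  ring

lemma intCast_div_mul_intCast_div (p q p' q' : ℤ) :
    (p / q * (p' / q') : ℝ) = ((p * p' : ℤ) : ℝ) / (q * q' : ℤ) := by
  push_cast
  exact div_mul_div_comm _ _ _ _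

variable {x y : ℝ}

lemma disjoint_Qzero_Qone : Disjoint Qzero Qone := by
  refine disjoint_left.2 fun x hx₀ hx₁ => ?_
  obtain ⟨p, q, hp, hq, rfl⟩ := mem_Qzero_iff.1 hx₀
  obtain ⟨p', q', hp', hq', heq⟩ := mem_Qone_iff.1 hx₁
  have hcross : p * q' = p' * q := by
    exact_mod_cast (div_eq_div_iff (intCast_ne_zero_of_odd hq) (intCast_ne_zero_of_odd hq')).1 heq
  exact Int.not_even_iff_odd.2 (hp'.mul hq) (hcross ▸ hp.mul_right q')

lemma add_mem_Qzero (hx : x ∈ Qzero) (hy : y ∈ Qzero) : x + y ∈ Qzero := by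
  obtain ⟨p, q, hp, hq, rfl⟩ := mem_Qzero_iff.1 hx
  obtain ⟨p', q', hp', hq', rfl⟩ := mem_Qzero_iff.1 hy
  exact mem_Qzero_iff.2 ⟨_, _, (hp.mul_right q').add (hp'.mul_left q), hq.mul hq',
    intCast_div_add_intCast_div hq hq'⟩

lemma add_mem_Qone_of_Qzero (hx : x ∈ Qzero) (hy : y ∈ Qone) : x + y ∈ Qone := by
  obtain ⟨p, q, hp, hq, rfl⟩ := mem_Qzero_iff.1 hx
  obtain ⟨p', q', hp', hq', rfl⟩ := mem_Qone_iff.1 hy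
  exact mem_Qone_iff.2 ⟨_, _, (hp.mul_right q').add_odd (hq.mul hp'), hq.mul hq',
    intCast_div_add_intCast_div hq hq'⟩

lemma add_mem_Qzero_of_Qone (hx : x ∈ Qone) (hy : y ∈ Qone) : x + y ∈ Qzero := by
  obtain ⟨p, q, hp, hq, rfl⟩ := mem_Qone_iff.1 hx
  obtain ⟨p', q', hp', hq', rfl⟩ := mem_Qone_iff.1 hy
  exact mem_Qzero_iff.2 ⟨_, _, (hp.mul hq').add_odd (hq.mul hp'), hq.mul hq',
    intCast_div_add_intCast_div hq hq'⟩

lemma mul_mem_Qzero (hx : x ∈ Qzero) (hy : y ∈ Qzero ∪ Qone) : x * y ∈ Qzero := by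
  obtain ⟨p, q, hp, hq, rfl⟩ := mem_Qzero_iff.1 hx
  obtain ⟨p', q', hq', rfl⟩ := exists_div_of_mem_Qzero_union_Qone hy
  exact mem_Qzero_iff.2 ⟨_, _, hp.mul_right p', hq.mul hq', intCast_div_mul_intCast_div _ _ _ _⟩

lemma mul_mem_Qone (hx : x ∈ Qone) (hy : y ∈ Qone) : x * y ∈ Qone := by
  obtain ⟨p, q, hp, hq, rfl⟩ := mem_Qone_iff.1 hx
  obtain ⟨p', q', hp', hq', rfl⟩ := mem_Qone_iff.1 hy
  exact mem_Qone_iff.2 ⟨_, _, hp.mul hp', hq.mul hq', intCast_div_mul_intCast_div _ _ _ _⟩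

lemma one_sub_mem_Qzero (hx : x ∈ Qone) : 1 - x ∈ Qzero := by
  obtain ⟨k, n, hn, rfl⟩ := hx
  have hne : (2 * n - 1 : ℝ) ≠ 0 := by
    have : (1 : ℝ) ≤ n := by exact_mod_cast hn
    linarith
  exact ⟨n - k, n, hn, by field_simp; push_cast; ring⟩

def QzeroAddSubgroup : AddSubgroup ℝ where
  carrier := Qzero
  add_mem' := add_mem_Qzero
  zero_mem' := ⟨0, 1, le_rfl, by simp⟩
  neg_mem' := by
    rintro _ ⟨k, n, hn, rfl⟩
    exact ⟨-k, n, hn, by push_cast; ring⟩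

lemma dense_Qzero : Dense Qzero := by
  refine QzeroAddSubgroup.dense_of_not_isolated_zero fun ε hε => ?_
  obtain ⟨N, hN⟩ := exists_nat_gt (2 / ε)
  have hN₀ : (0 : ℝ) ≤ N := N.cast_nonneg
  have hpos : (0 : ℝ) < 2 * (N + 1 : ℕ) - 1 := by push_cast; linarith
  refine ⟨2 / (2 * (N + 1 : ℕ) - 1), ⟨1, N + 1, by omega, by simp⟩, div_pos two_pos hpos,
    (div_lt_comm₀ hpos hε).2 ?_⟩
  push_cast
  linarith

lemma mul_add_one_sub_mul_mem_Qzero {t : ℝ} (ht : t ∈ Qone) (hx : x ∈ Qzero)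
    (hy : y ∈ Qzero ∪ Qone) : t * x + (1 - t) * y ∈ Qzero :=
  add_mem_Qzero (mul_comm x t ▸ mul_mem_Qzero hx (Or.inr ht))
    (mul_mem_Qzero (one_sub_mem_Qzero ht) hy)

lemma one_sub_mul_add_mul_mem_Qone {t : ℝ} (ht : t ∈ Qone) (hx : x ∈ Qzero) (hy : y ∈ Qone) :
    (1 - t) * x + t * y ∈ Qone :=
  add_mem_Qone_of_Qzero (mul_mem_Qzero (one_sub_mem_Qzero ht) (Or.inl hx)) (mul_mem_Qone ht hy)

end OddDenominators

open Classical in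
/-- `ℚ₀` and `ℚ₁` are disjoint subsets of `ℚ` with the stated additive
and multiplicative closure properties; moreover, for an interval `I` whose supremum `a`
belongs to `I ∩ ℚ₁`, a convex `h : I → ℝ`, and `f = h` on `(I ∩ ℚ₀) ∪ {a}`, `f = +∞`
elsewhere on `I`, the function `f` is upper `A_t`-convex but not upper `A_{1-t}`-convex
for every `t ∈ (0,1) ∩ ℚ₁`. -/
theorem stmt14 :
    Qzero ⊆ Set.range ((↑) : ℚ → ℝ) ∧
    Qone ⊆ Set.range ((↑) : ℚ → ℝ) ∧
    Disjoint Qzero Qone ∧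
    (∀ x ∈ Qzero, ∀ y ∈ Qzero, x + y ∈ Qzero) ∧
    (∀ x ∈ Qzero, ∀ y ∈ Qone, x + y ∈ Qone) ∧
    (∀ x ∈ Qone, ∀ y ∈ Qone, x + y ∈ Qzero) ∧
    (∀ x ∈ Qzero, ∀ y ∈ Qzero, x * y ∈ Qzero) ∧
    (∀ x ∈ Qzero, ∀ y ∈ Qone, x * y ∈ Qzero) ∧
    (∀ x ∈ Qone, ∀ y ∈ Qone, x * y ∈ Qone) ∧
    (∀ (I : Set ℝ), Set.OrdConnected I →
      ∀ a : ℝ, IsGreatest I a → a ∈ Qone → (∃ b ∈ I, b < a) →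
      ∀ h : ℝ → ℝ, ConvexOn ℝ I h →
      ∀ f : ℝ → EReal,
        (∀ x ∈ I, f x = if x ∈ (I ∩ Qzero) ∪ {a} then ((h x : ℝ) : EReal) else ⊤) →
      ∀ t ∈ Set.Ioo (0 : ℝ) 1, t ∈ Qone →
        UpperConvexWrt I (fun x y => t * x + (1 - t) * y) f ∧
        ¬ UpperConvexWrt I (fun x y => (1 - t) * x + t * y) f) := by
  refine ⟨subset_range_ratCast_of_subset_Qzero_union_Qone subset_union_left,
    subset_range_ratCast_of_subset_Qzero_union_Qone subset_union_right, disjoint_Qzero_Qone,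
    fun _ hx _ hy => add_mem_Qzero hx hy, fun _ hx _ hy => add_mem_Qone_of_Qzero hx hy,
    fun _ hx _ hy => add_mem_Qzero_of_Qone hx hy, fun _ hx _ hy => mul_mem_Qzero hx (Or.inl hy),
    fun _ hx _ hy => mul_mem_Qzero hx (Or.inr hy), fun _ hx _ hy => mul_mem_Qone hx hy, ?_⟩
  rintro I hI a ⟨haI, ha_max⟩ haQ ⟨b, hbI, hba⟩ h hh f hf t ⟨ht₀, ht₁⟩ htQ
  have hA : ∀ x y : ℝ, x < y → t * x + (1 - t) * y ∈ Ioo x y := fun x y =>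
    mul_add_mul_mem_Ioo ht₀ (sub_pos.2 ht₁) (add_sub_cancel t 1)
  constructor
  · refine upperConvexWrt_of_convexOn hI hh hA ?_ hf
    rintro x ⟨hxI, hxS⟩ y ⟨hyI, hyS⟩ hxy
    have hxQ : x ∈ Qzero := hxS.elim And.right fun hxa => absurd (ha_max hyI) (hxa ▸ hxy).not_ge
    have hyQ : y ∈ Qzero ∪ Qone := hyS.imp And.right fun hya : y = a => hya ▸ haQ
    exact Or.inl ⟨hI.out hxI hyI (Ioo_subset_Icc_self (hA x y hxy)),
      mul_add_one_sub_mul_mem_Qzero htQ hxQ hyQ⟩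
  · obtain ⟨x, hxQ, hbx, hxa⟩ := dense_Qzero.exists_between hba
    have hxI : x ∈ I := hI.out hbI haI ⟨hbx.le, hxa.le⟩
    have hm := mul_add_mul_mem_Ioo (sub_pos.2 ht₁) ht₀ (sub_add_cancel 1 t) hxa
    refine not_upperConvexWrt_of_not_mem hI hf ⟨hxI, Or.inl ⟨hxI, hxQ⟩⟩ ⟨haI, Or.inr rfl⟩ hxa hm ?_
    rintro (⟨-, hm₀⟩ | hma)
    · exact disjoint_left.1 disjoint_Qzero_Qone hm₀ (one_sub_mul_add_mul_mem_Qone htQ hxQ haQ)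
    · exact hm.2.ne hma
end

section
/- Let I ⊆ ℝ be a nonempty interval and f : I → ℝ̄. If M, N₁, N₂ are strict two-variable means on I such that f is lower M-convex, lower N₁-convex and lower N₂-convex, and N₁(x,y) < N₂(x,y) for all x < y in I, then the function (x,y) ↦ M(N₁(x,y), N₂(x,y)) is a strict mean on I and f is lower convex with respect to it. The same statement holds with 'upper' in place of 'lower' throughout. Moreover, if M and N are strict means on I and f is lower (resp. upper) M-convex and N-convex, then f is lower (resp. upper) convex with respect to the strict means (x,y) ↦ M(x, N(x,y)) and (x,y) ↦ M(N(x,y), y). -/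
set_option maxHeartbeats 1000000 in
private lemma ldd_nonneg_iff (f : ℝ → EReal) {x u y : ℝ} (hxu : x < u) (huy : u < y) :
    0 ≤ ldd f x u y ↔
      f x ≠ ⊥ ∧ f y ≠ ⊥ ∧ f u ≠ ⊤ ∧
      ∀ a b c : ℝ, f x = (a : EReal) → f u = (c : EReal) → f y = (b : EReal) →
        (y - x) * c ≤ (y - u) * a + (u - x) * b := by
  have hp1 : (0:ℝ) < 1 / ((u - x) * (y - x)) := by
    have h1 := sub_pos.2 hxu; have h2 : (0:ℝ) < y - x := by linarith
    positivity
  have hn2 : 1 / ((x - u) * (y - u)) < (0:ℝ) := by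
    apply div_neg_of_pos_of_neg one_pos
    have h1 := sub_pos.2 hxu; have h2 := sub_pos.2 huy; nlinarith
  have hp3 : (0:ℝ) < 1 / ((x - y) * (u - y)) := by
    have h1 : x - y < 0 := by linarith
    have h2 : u - y < 0 := by linarith
    have : (0:ℝ) < (x - y) * (u - y) := mul_pos_of_neg_of_neg h1 h2
    positivity
  unfold ldd
  induction f x using EReal.rec <;> induction f u using EReal.rec <;>
    induction f y using EReal.rec <;>
    simp_all [lsum, EReal.coe_mul_bot_of_pos, EReal.coe_mul_bot_of_neg,
      EReal.coe_mul_top_of_pos, EReal.coe_mul_top_of_neg, hp1, hn2, hp3, ← EReal.coe_mul,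
      ← EReal.coe_add]
  rename_i a c b
  have g1 : (0:ℝ) < u - x := by linarith
  have g2 : (0:ℝ) < y - u := by linarith
  have g3 : (0:ℝ) < y - x := by linarith
  have h1 : u - x ≠ 0 := by linarith
  have h2 : y - u ≠ 0 := by linarith
  have h3 : y - x ≠ 0 := by linarith
  have h4 : x - u ≠ 0 := by linarith
  have h5 : u - y ≠ 0 := by linarith
  have h6 : x - y ≠ 0 := by linarith
  have hD : (0:ℝ) < (u - x) * ((y - u) * (y - x)) := by positivity
  have E : ((y - x)⁻¹ * (u - x)⁻¹ * a + (y - u)⁻¹ * (x - u)⁻¹ * c + (u - y)⁻¹ * (x - y)⁻¹ * b) *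
      ((u - x) * ((y - u) * (y - x))) = (y - u) * a + (u - x) * b - (y - x) * c := by
    field_simp
    ring
  rw [← sub_nonneg (b := (y - x) * c), ← E, mul_nonneg_iff_of_pos_right hD]

set_option maxHeartbeats 1000000 in
private lemma udd_nonneg_iff (f : ℝ → EReal) {x u y : ℝ} (hxu : x < u) (huy : u < y) :
    0 ≤ udd f x u y ↔
      (f x = ⊤ ∨ f y = ⊤ ∨ f u = ⊥) ∨
      (f x ≠ ⊥ ∧ f y ≠ ⊥ ∧ f u ≠ ⊤ ∧
      ∀ a b c : ℝ, f x = (a : EReal) → f u = (c : EReal) → f y = (b : EReal) →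
        (y - x) * c ≤ (y - u) * a + (u - x) * b) := by
  have hp1 : (0:ℝ) < 1 / ((u - x) * (y - x)) := by
    have h1 := sub_pos.2 hxu; have h2 : (0:ℝ) < y - x := by linarith
    positivity
  have hn2 : 1 / ((x - u) * (y - u)) < (0:ℝ) := by
    apply div_neg_of_pos_of_neg one_pos
    have h1 := sub_pos.2 hxu; have h2 := sub_pos.2 huy; nlinarith
  have hp3 : (0:ℝ) < 1 / ((x - y) * (u - y)) := by
    have h1 : x - y < 0 := by linarith
    have h2 : u - y < 0 := by linarith
    have : (0:ℝ) < (x - y) * (u - y) := mul_pos_of_neg_of_neg h1 h2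
    positivity
  unfold udd
  induction f x using EReal.rec <;> induction f u using EReal.rec <;>
    induction f y using EReal.rec <;>
    simp_all [usum, EReal.coe_mul_bot_of_pos, EReal.coe_mul_bot_of_neg,
      EReal.coe_mul_top_of_pos, EReal.coe_mul_top_of_neg, hp1, hn2, hp3, ← EReal.coe_mul,
      ← EReal.coe_add]
  rename_i a c b
  have g1 : (0:ℝ) < u - x := by linarith
  have g2 : (0:ℝ) < y - u := by linarith
  have g3 : (0:ℝ) < y - x := by linarith
  have h1 : u - x ≠ 0 := by linarith
  have h2 : y - u ≠ 0 := by linarith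
  have h3 : y - x ≠ 0 := by linarith
  have h4 : x - u ≠ 0 := by linarith
  have h5 : u - y ≠ 0 := by linarith
  have h6 : x - y ≠ 0 := by linarith
  have hD : (0:ℝ) < (u - x) * ((y - u) * (y - x)) := by positivity
  have E : ((y - x)⁻¹ * (u - x)⁻¹ * a + (y - u)⁻¹ * (x - u)⁻¹ * c + (u - y)⁻¹ * (x - y)⁻¹ * b) *
      ((u - x) * ((y - u) * (y - x))) = (y - u) * a + (u - x) * b - (y - x) * c := by
    field_simp
    ring
  rw [← sub_nonneg (b := (y - x) * c), ← E, mul_nonneg_iff_of_pos_right hD]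

private lemma myExistsCoe {z : EReal} (h1 : z ≠ ⊥) (h2 : z ≠ ⊤) : ∃ c : ℝ, z = (c : EReal) := by
  induction z using EReal.rec
  · exact absurd rfl h1
  · exact ⟨_, rfl⟩
  · exact absurd rfl h2

private lemma combine_l (f : ℝ → EReal) {x u m v y : ℝ} (hxu : x ≤ u) (hum : u < m)
    (hmv : m < v) (hvy : v ≤ y)
    (h1 : x < u → 0 ≤ ldd f x u y) (h2 : v < y → 0 ≤ ldd f x v y)
    (h3 : 0 ≤ ldd f u m v) : 0 ≤ ldd f x m y := by
  obtain ⟨hub, hvb, hmt, hch3⟩ := (ldd_nonneg_iff f hum hmv).1 h3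
  have hxm : x < m := lt_of_le_of_lt hxu hum
  have hmy : m < y := lt_of_lt_of_le hmv hvy
  have hxy : x < y := hxm.trans hmy
  have huy : u < y := lt_of_lt_of_le (hum.trans hmv) hvy
  have hxv : x < v := hxm.trans hmv
  rw [ldd_nonneg_iff f hxm hmy]
  have hxb : f x ≠ ⊥ := by
    rcases eq_or_lt_of_le hxu with rfl | h
    · exact hub
    · exact ((ldd_nonneg_iff f h huy).1 (h1 h)).1
  have hyb : f y ≠ ⊥ := by
    rcases eq_or_lt_of_le hvy with rfl | h
    · exact hvb
    · exact ((ldd_nonneg_iff f hxv h).1 (h2 h)).2.1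
  refine ⟨hxb, hyb, hmt, ?_⟩
  intro a b e hfx hfm hfy
  obtain ⟨c, hfu, hcu⟩ : ∃ c : ℝ, f u = (c : EReal) ∧
      (y - x) * c ≤ (y - u) * a + (u - x) * b := by
    rcases eq_or_lt_of_le hxu with rfl | h
    · exact ⟨a, hfx, by nlinarith⟩
    · obtain ⟨_, _, hut, hch1⟩ := (ldd_nonneg_iff f h huy).1 (h1 h)
      obtain ⟨c, hc⟩ := myExistsCoe hub hut
      exact ⟨c, hc, hch1 a b c hfx hc hfy⟩
  obtain ⟨d, hfv, hcv⟩ : ∃ d : ℝ, f v = (d : EReal) ∧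
      (y - x) * d ≤ (y - v) * a + (v - x) * b := by
    rcases eq_or_lt_of_le hvy with rfl | h
    · exact ⟨b, hfy, by nlinarith⟩
    · obtain ⟨_, _, hvt, hch2⟩ := (ldd_nonneg_iff f hxv h).1 (h2 h)
      obtain ⟨d, hd⟩ := myExistsCoe hvb hvt
      exact ⟨d, hd, hch2 a b d hfx hd hfy⟩
  have h3' : (v - u) * e ≤ (v - m) * c + (m - u) * d := hch3 c d e hfu hfm hfv
  have huv : (0:ℝ) < v - u := by linarith
  nlinarith [mul_le_mul_of_nonneg_left hcu (by linarith : (0:ℝ) ≤ v - m),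
    mul_le_mul_of_nonneg_left hcv (by linarith : (0:ℝ) ≤ m - u),
    mul_le_mul_of_nonneg_left h3' (by linarith : (0:ℝ) ≤ y - x)]

private lemma combine_u (f : ℝ → EReal) {x u m v y : ℝ} (hxu : x ≤ u) (hum : u < m)
    (hmv : m < v) (hvy : v ≤ y)
    (h1 : x < u → 0 ≤ udd f x u y) (h2 : v < y → 0 ≤ udd f x v y)
    (h3 : 0 ≤ udd f u m v) : 0 ≤ udd f x m y := by
  have hxm : x < m := lt_of_le_of_lt hxu hum
  have hmy : m < y := lt_of_lt_of_le hmv hvy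
  have hxy : x < y := hxm.trans hmy
  have huy : u < y := lt_of_lt_of_le (hum.trans hmv) hvy
  have hxv : x < v := hxm.trans hmv
  rw [udd_nonneg_iff f hxm hmy]
  have D3 := (udd_nonneg_iff f hum hmv).1 h3
  by_cases hmB : f m = ⊥
  · exact Or.inl (Or.inr (Or.inr hmB))
  by_cases hxT : f x = ⊤
  · exact Or.inl (Or.inl hxT)
  by_cases hyT : f y = ⊤
  · exact Or.inl (Or.inr (Or.inl hyT))
  have huT : f u ≠ ⊤ := by
    intro h
    rcases eq_or_lt_of_le hxu with rfl | hlt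
    · exact hxT h
    · rcases (udd_nonneg_iff f hlt huy).1 (h1 hlt) with (hx | hy | hub) | ⟨_, _, hut, _⟩
      · exact hxT hx
      · exact hyT hy
      · simp [h] at hub
      · exact hut h
  have hvT : f v ≠ ⊤ := by
    intro h
    rcases eq_or_lt_of_le hvy with rfl | hlt
    · exact hyT h
    · rcases (udd_nonneg_iff f hxv hlt).1 (h2 hlt) with (hx | hy | hvb) | ⟨_, _, hvt, _⟩
      · exact hxT hx
      · exact hyT hy
      · simp [h] at hvb
      · exact hvt h
  rcases D3 with (h | h | h) | ⟨hub, hvb, hmt, hch3⟩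
  · exact absurd h huT
  · exact absurd h hvT
  · exact absurd h hmB
  have hxb : f x ≠ ⊥ := by
    rcases eq_or_lt_of_le hxu with rfl | hlt
    · exact hub
    · rcases (udd_nonneg_iff f hlt huy).1 (h1 hlt) with (hx | hy | h) | ⟨hb, _, _, _⟩
      · exact absurd hx hxT
      · exact absurd hy hyT
      · exact absurd h hub
      · exact hb
  have hyb : f y ≠ ⊥ := by
    rcases eq_or_lt_of_le hvy with rfl | hlt
    · exact hvb
    · rcases (udd_nonneg_iff f hxv hlt).1 (h2 hlt) with (hx | hy | h) | ⟨_, hb, _, _⟩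
      · exact absurd hx hxT
      · exact absurd hy hyT
      · exact absurd h hvb
      · exact hb
  refine Or.inr ⟨hxb, hyb, hmt, ?_⟩
  intro a b e hfx hfm hfy
  obtain ⟨c, hfu, hcu⟩ : ∃ c : ℝ, f u = (c : EReal) ∧
      (y - x) * c ≤ (y - u) * a + (u - x) * b := by
    rcases eq_or_lt_of_le hxu with rfl | hlt
    · exact ⟨a, hfx, by nlinarith⟩
    · rcases (udd_nonneg_iff f hlt huy).1 (h1 hlt) with (hx | hy | h) | ⟨_, _, hut, hch1⟩
      · exact absurd hx hxT
      · exact absurd hy hyT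
      · exact absurd h hub
      · obtain ⟨c, hc⟩ := myExistsCoe hub hut
        exact ⟨c, hc, hch1 a b c hfx hc hfy⟩
  obtain ⟨d, hfv, hcv⟩ : ∃ d : ℝ, f v = (d : EReal) ∧
      (y - x) * d ≤ (y - v) * a + (v - x) * b := by
    rcases eq_or_lt_of_le hvy with rfl | hlt
    · exact ⟨b, hfy, by nlinarith⟩
    · rcases (udd_nonneg_iff f hxv hlt).1 (h2 hlt) with (hx | hy | h) | ⟨_, _, hvt, hch2⟩
      · exact absurd hx hxT
      · exact absurd hy hyT
      · exact absurd h hvb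
      · obtain ⟨d, hd⟩ := myExistsCoe hvb hvt
        exact ⟨d, hd, hch2 a b d hfx hd hfy⟩
  have h3' : (v - u) * e ≤ (v - m) * c + (m - u) * d := hch3 c d e hfu hfm hfv
  have huv : (0:ℝ) < v - u := by linarith
  nlinarith [mul_le_mul_of_nonneg_left hcu (by linarith : (0:ℝ) ≤ v - m),
    mul_le_mul_of_nonneg_left hcv (by linarith : (0:ℝ) ≤ m - u),
    mul_le_mul_of_nonneg_left h3' (by linarith : (0:ℝ) ≤ y - x)]

private lemma mean_fix {I : Set ℝ} {N : ℝ → ℝ → ℝ} (hN : IsStrictMeanOn I N)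
    {x : ℝ} (hx : x ∈ I) : N x x = x :=
  le_antisymm (hN.1 x hx x hx le_rfl).2 (hN.1 x hx x hx le_rfl).1

private lemma mem_of_between {I : Set ℝ} (hI : Set.OrdConnected I) {x y t : ℝ}
    (hx : x ∈ I) (hy : y ∈ I) (h1 : x ≤ t) (h2 : t ≤ y) : t ∈ I :=
  hI.out hx hy ⟨h1, h2⟩

private lemma mean_comp2 {I : Set ℝ} (hI : Set.OrdConnected I) {M N₁ N₂ : ℝ → ℝ → ℝ}
    (hM : IsStrictMeanOn I M) (hN₁ : IsStrictMeanOn I N₁) (hN₂ : IsStrictMeanOn I N₂)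
    (hlt : ∀ x ∈ I, ∀ y ∈ I, x < y → N₁ x y < N₂ x y) :
    IsStrictMeanOn I (fun x y => M (N₁ x y) (N₂ x y)) := by
  constructor
  · intro x hx y hy hxy
    rcases eq_or_lt_of_le hxy with rfl | h
    · simp only [mean_fix hN₁ hx, mean_fix hN₂ hx]
      exact hM.1 x hx x hx le_rfl
    · have h1 := hN₁.2 x hx y hy h
      have h2 := hN₂.2 x hx y hy h
      have hN1I : N₁ x y ∈ I := mem_of_between hI hx hy h1.1.le h1.2.le
      have hN2I : N₂ x y ∈ I := mem_of_between hI hx hy h2.1.le h2.2.le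
      have hm := hM.1 _ hN1I _ hN2I (hlt x hx y hy h).le
      exact ⟨h1.1.le.trans hm.1, hm.2.trans h2.2.le⟩
  · intro x hx y hy h
    have h1 := hN₁.2 x hx y hy h
    have h2 := hN₂.2 x hx y hy h
    have hN1I : N₁ x y ∈ I := mem_of_between hI hx hy h1.1.le h1.2.le
    have hN2I : N₂ x y ∈ I := mem_of_between hI hx hy h2.1.le h2.2.le
    have hm := hM.1 _ hN1I _ hN2I (hlt x hx y hy h).le
    exact ⟨h1.1.trans_le hm.1, hm.2.trans_lt h2.2⟩

private lemma mean_comp_left {I : Set ℝ} (hI : Set.OrdConnected I) {M N : ℝ → ℝ → ℝ}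
    (hM : IsStrictMeanOn I M) (hN : IsStrictMeanOn I N) :
    IsStrictMeanOn I (fun x y => M x (N x y)) := by
  constructor
  · intro x hx y hy hxy
    have hw := hN.1 x hx y hy hxy
    have hwI : N x y ∈ I := mem_of_between hI hx hy hw.1 hw.2
    have hm := hM.1 x hx _ hwI hw.1
    exact ⟨hm.1, hm.2.trans hw.2⟩
  · intro x hx y hy h
    have hw := hN.2 x hx y hy h
    have hwI : N x y ∈ I := mem_of_between hI hx hy hw.1.le hw.2.le
    have hm := hM.2 x hx _ hwI hw.1
    exact ⟨hm.1, hm.2.trans hw.2⟩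

private lemma mean_comp_right {I : Set ℝ} (hI : Set.OrdConnected I) {M N : ℝ → ℝ → ℝ}
    (hM : IsStrictMeanOn I M) (hN : IsStrictMeanOn I N) :
    IsStrictMeanOn I (fun x y => M (N x y) y) := by
  constructor
  · intro x hx y hy hxy
    have hw := hN.1 x hx y hy hxy
    have hwI : N x y ∈ I := mem_of_between hI hx hy hw.1 hw.2
    have hm := hM.1 _ hwI y hy hw.2
    exact ⟨hw.1.trans hm.1, hm.2⟩
  · intro x hx y hy h
    have hw := hN.2 x hx y hy h
    have hwI : N x y ∈ I := mem_of_between hI hx hy hw.1.le hw.2.le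
    have hm := hM.2 _ hwI y hy hw.2
    exact ⟨hw.1.trans hm.1, hm.2⟩

/-- Closure properties of the classes of means making `f` lower
(resp. upper) convex: composition `M∘(N₁,N₂)` for `N₁ < N₂`, and the compositions
`M∘(min,N) = M(x,N(x,y))` and `M∘(N,max) = M(N(x,y),y)`, are again strict means with
respect to which `f` is lower (resp. upper) convex. -/
theorem stmt15 (I : Set ℝ) (hI : Set.OrdConnected I) (hne : I.Nonempty) (f : ℝ → EReal) :
    (∀ M N₁ N₂ : ℝ → ℝ → ℝ,
      IsStrictMeanOn I M → IsStrictMeanOn I N₁ → IsStrictMeanOn I N₂ →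
      LowerConvexWrt I M f → LowerConvexWrt I N₁ f → LowerConvexWrt I N₂ f →
      (∀ x ∈ I, ∀ y ∈ I, x < y → N₁ x y < N₂ x y) →
      IsStrictMeanOn I (fun x y => M (N₁ x y) (N₂ x y)) ∧
        LowerConvexWrt I (fun x y => M (N₁ x y) (N₂ x y)) f) ∧
    (∀ M N₁ N₂ : ℝ → ℝ → ℝ,
      IsStrictMeanOn I M → IsStrictMeanOn I N₁ → IsStrictMeanOn I N₂ →
      UpperConvexWrt I M f → UpperConvexWrt I N₁ f → UpperConvexWrt I N₂ f →
      (∀ x ∈ I, ∀ y ∈ I, x < y → N₁ x y < N₂ x y) →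
      IsStrictMeanOn I (fun x y => M (N₁ x y) (N₂ x y)) ∧
        UpperConvexWrt I (fun x y => M (N₁ x y) (N₂ x y)) f) ∧
    (∀ M N : ℝ → ℝ → ℝ,
      IsStrictMeanOn I M → IsStrictMeanOn I N →
      LowerConvexWrt I M f → LowerConvexWrt I N f →
      (IsStrictMeanOn I (fun x y => M x (N x y)) ∧
        LowerConvexWrt I (fun x y => M x (N x y)) f) ∧
      (IsStrictMeanOn I (fun x y => M (N x y) y) ∧
        LowerConvexWrt I (fun x y => M (N x y) y) f)) ∧
    (∀ M N : ℝ → ℝ → ℝ,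
      IsStrictMeanOn I M → IsStrictMeanOn I N →
      UpperConvexWrt I M f → UpperConvexWrt I N f →
      (IsStrictMeanOn I (fun x y => M x (N x y)) ∧
        UpperConvexWrt I (fun x y => M x (N x y)) f) ∧
      (IsStrictMeanOn I (fun x y => M (N x y) y) ∧
        UpperConvexWrt I (fun x y => M (N x y) y) f)) := by
  refine ⟨?_, ?_, ?_, ?_⟩
  · intro M N₁ N₂ hM hN₁ hN₂ cM cN₁ cN₂ hlt
    refine ⟨mean_comp2 hI hM hN₁ hN₂ hlt, ?_⟩
    intro x hx y hy hxy
    have h1 := hN₁.2 x hx y hy hxy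
    have h2 := hN₂.2 x hx y hy hxy
    have hN1I : N₁ x y ∈ I := mem_of_between hI hx hy h1.1.le h1.2.le
    have hN2I : N₂ x y ∈ I := mem_of_between hI hx hy h2.1.le h2.2.le
    have hlt' := hlt x hx y hy hxy
    have hm := hM.2 _ hN1I _ hN2I hlt'
    exact combine_l f h1.1.le hm.1 hm.2 h2.2.le (fun _ => cN₁ x hx y hy hxy)
      (fun _ => cN₂ x hx y hy hxy) (cM _ hN1I _ hN2I hlt')
  · intro M N₁ N₂ hM hN₁ hN₂ cM cN₁ cN₂ hlt
    refine ⟨mean_comp2 hI hM hN₁ hN₂ hlt, ?_⟩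
    intro x hx y hy hxy
    have h1 := hN₁.2 x hx y hy hxy
    have h2 := hN₂.2 x hx y hy hxy
    have hN1I : N₁ x y ∈ I := mem_of_between hI hx hy h1.1.le h1.2.le
    have hN2I : N₂ x y ∈ I := mem_of_between hI hx hy h2.1.le h2.2.le
    have hlt' := hlt x hx y hy hxy
    have hm := hM.2 _ hN1I _ hN2I hlt'
    exact combine_u f h1.1.le hm.1 hm.2 h2.2.le (fun _ => cN₁ x hx y hy hxy)
      (fun _ => cN₂ x hx y hy hxy) (cM _ hN1I _ hN2I hlt')
  · intro M N hM hN cM cN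
    refine ⟨⟨mean_comp_left hI hM hN, ?_⟩, ⟨mean_comp_right hI hM hN, ?_⟩⟩
    · intro x hx y hy hxy
      have hw := hN.2 x hx y hy hxy
      have hwI : N x y ∈ I := mem_of_between hI hx hy hw.1.le hw.2.le
      have hm := hM.2 x hx _ hwI hw.1
      exact combine_l f le_rfl hm.1 hm.2 hw.2.le (fun h => absurd h (lt_irrefl x))
        (fun _ => cN x hx y hy hxy) (cM x hx _ hwI hw.1)
    · intro x hx y hy hxy
      have hw := hN.2 x hx y hy hxy
      have hwI : N x y ∈ I := mem_of_between hI hx hy hw.1.le hw.2.le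
      have hm := hM.2 _ hwI y hy hw.2
      exact combine_l f hw.1.le hm.1 hm.2 le_rfl (fun _ => cN x hx y hy hxy)
        (fun h => absurd h (lt_irrefl y)) (cM _ hwI y hy hw.2)
  · intro M N hM hN cM cN
    refine ⟨⟨mean_comp_left hI hM hN, ?_⟩, ⟨mean_comp_right hI hM hN, ?_⟩⟩
    · intro x hx y hy hxy
      have hw := hN.2 x hx y hy hxy
      have hwI : N x y ∈ I := mem_of_between hI hx hy hw.1.le hw.2.le
      have hm := hM.2 x hx _ hwI hw.1
      exact combine_u f le_rfl hm.1 hm.2 hw.2.le (fun h => absurd h (lt_irrefl x))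
        (fun _ => cN x hx y hy hxy) (cM x hx _ hwI hw.1)
    · intro x hx y hy hxy
      have hw := hN.2 x hx y hy hxy
      have hwI : N x y ∈ I := mem_of_between hI hx hy hw.1.le hw.2.le
      have hm := hM.2 _ hwI y hy hw.2
      exact combine_u f hw.1.le hm.1 hm.2 le_rfl (fun _ => cN x hx y hy hxy)
        (fun h => absurd h (lt_irrefl y)) (cM _ hwI y hy hw.2)
end

section
/- Let I ⊆ ℝ be a nonempty interval, f : I → ℝ̄, n ≥ 2, s₁,…,sₙ ∈ (0,1), and let h : I → ℝ be a continuous strictly increasing function. If f is lower M_{sᵢh,(1−sᵢ)h}-convex for every i ∈ {1,…,n}, then f is lower M_{σᵢh,(1−σᵢ)h}-convex for every i ∈ {1,…,n}, where σᵢ := (Σ_{j=i}^{n} Π_{k=1}^{j} s_k/(1−s_k)) / (Σ_{j=0}^{n} Π_{k=1}^{j} s_k/(1−s_k)), with the empty product (j = 0) equal to 1. -/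
/-!
Fix `x < y` in `I` and put `ξ₀ = x`, `ξ_{n+1} = y` and `ξ_j = M_{σ_j h,(1-σ_j)h}(x, y)`, so that
`h ξ_j = σ_j h x + (1 - σ_j) h y` with `1 = σ₀ > σ₁ > ⋯ > σ_{n+1} = 0`. The increments
`σ_j - σ_{j+1}` are proportional to `∏_{k<j} s_k/(1-s_k)`, which is exactly what makes
`σ_{j+1} = s_j σ_j + (1 - s_j) σ_{j+2}`, i.e. `ξ_{j+1} = M_{s_j h,(1-s_j)h}(ξ_j, ξ_{j+2})`.
Hence the hypothesis gives `⌊ξ_j, ξ_{j+1}, ξ_{j+2}; f⌋ ≥ 0` for all adjacent triples of the grid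
`x = ξ₀ < ξ₁ < ⋯ < ξ_{n+1} = y`. Once the infinite values are sorted out, this says that the
slopes of `f` along the grid increase, and then the slope over `[x, ξ_k]` is at most the slope
over `[ξ_k, y]`, which is `⌊x, ξ_k, y; f⌋ ≥ 0`.
-/
section SlopeOrder

variable {F : ℝ → ℝ} {a b c : ℝ}

theorem slope_le_slope_left_iff (hab : a < b) (hbc : b < c) :
    slope F a b ≤ slope F a c ↔ slope F a b ≤ slope F b c := by
  simp only [slope_def_field]
  rw [div_le_div_iff₀ (by linarith) (by linarith), div_le_div_iff₀ (by linarith) (by linarith)]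
  constructor <;> intro H <;> nlinarith

theorem slope_le_slope_right_iff (hab : a < b) (hbc : b < c) :
    slope F a c ≤ slope F b c ↔ slope F a b ≤ slope F b c := by
  simp only [slope_def_field]
  rw [div_le_div_iff₀ (by linarith) (by linarith), div_le_div_iff₀ (by linarith) (by linarith)]
  constructor <;> intro H <;> nlinarith

end SlopeOrder

theorem ldd_nonneg_iff_s18 {f : ℝ → EReal} {a b c : ℝ} (hab : a < b) (hbc : b < c) :
    0 ≤ ldd f a b c ↔ f a ≠ ⊥ ∧ f c ≠ ⊥ ∧ f b ≠ ⊤ ∧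
      (f a = ⊤ ∨ f c = ⊤ ∨ f b = ⊥ ∨
        slope (fun t => (f t).toReal) a b ≤ slope (fun t => (f t).toReal) b c) := by
  have hreal : ∀ A B C : ℝ, 0 ≤ 1 / ((b - a) * (c - a)) * A + 1 / ((a - b) * (c - b)) * B +
      1 / ((a - c) * (b - c)) * C ↔ (B - A) / (b - a) ≤ (C - B) / (c - b) := by
    intro A B C
    have key : (C - B) / (c - b) - (B - A) / (b - a) = (c - a) * (1 / ((b - a) * (c - a)) * A +
        1 / ((a - b) * (c - b)) * B + 1 / ((a - c) * (b - c)) * C) := by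
      field_simp [sub_ne_zero.2 hab.ne, sub_ne_zero.2 hbc.ne, sub_ne_zero.2 (hab.trans hbc).ne,
        sub_ne_zero.2 hab.ne', sub_ne_zero.2 hbc.ne', sub_ne_zero.2 (hab.trans hbc).ne']
      ring
    rw [← sub_nonneg (b := (B - A) / (b - a)), key, mul_nonneg_iff_of_pos_left (by linarith)]
  have hp : 0 < 1 / ((b - a) * (c - a)) := one_div_pos.2 (mul_pos (by linarith) (by linarith))
  -- the coefficient of `f b` is negative, so `f b = ⊥` contributes `+∞` to the lower sum
  have hq : 1 / ((a - b) * (c - b)) < 0 :=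
    one_div_neg.2 (mul_neg_of_neg_of_pos (by linarith) (by linarith))
  have hr : 0 < 1 / ((a - c) * (b - c)) :=
    one_div_pos.2 (mul_pos_of_neg_of_neg (by linarith) (by linarith))
  rw [slope_def_field, slope_def_field]
  unfold ldd lsum
  generalize f a = A, f b = B, f c = C
  generalize 1 / ((b - a) * (c - a)) = p at *
  generalize 1 / ((a - b) * (c - b)) = q at *
  generalize 1 / ((a - c) * (b - c)) = r at *
  induction A using EReal.rec <;> induction B using EReal.rec <;> induction C using EReal.rec <;>
    simp only [← EReal.coe_mul, EReal.coe_mul_bot_of_pos hp, EReal.coe_mul_top_of_pos hp,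
      EReal.coe_mul_bot_of_neg hq, EReal.coe_mul_top_of_neg hq, EReal.coe_mul_bot_of_pos hr,
      EReal.coe_mul_top_of_pos hr] <;>
    simp [-EReal.coe_mul, ← EReal.coe_add, hreal]

section AdjacentSlopes

variable {F : ℝ → ℝ} {ξ : ℕ → ℝ} {N : ℕ}

theorem slope_zero_le_slope_of_adjacent (hξ : StrictMonoOn ξ (Set.Iic N))
    (hF : ∀ j, j + 2 ≤ N → slope F (ξ j) (ξ (j + 1)) ≤ slope F (ξ (j + 1)) (ξ (j + 2))) :
    ∀ k, k + 1 ≤ N → slope F (ξ 0) (ξ (k + 1)) ≤ slope F (ξ k) (ξ (k + 1))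
  | 0, _ => le_rfl
  | k + 1, hk => by
    have ih := slope_zero_le_slope_of_adjacent hξ hF k (by omega)
    refine (slope_le_slope_right_iff (hξ ?_ ?_ (by omega)) (hξ ?_ ?_ (by omega))).2
      (ih.trans (hF k hk)) <;> simp only [Set.mem_Iic] <;> omega

theorem slope_le_slope_last_of_adjacent (hξ : StrictMonoOn ξ (Set.Iic N))
    (hF : ∀ j, j + 2 ≤ N → slope F (ξ j) (ξ (j + 1)) ≤ slope F (ξ (j + 1)) (ξ (j + 2))) :
    ∀ d k, k + d + 1 = N → slope F (ξ k) (ξ (k + 1)) ≤ slope F (ξ k) (ξ N)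
  | 0, k, hk => by rw [← hk]
  | d + 1, k, hk => by
    have ih := slope_le_slope_last_of_adjacent hξ hF d (k + 1) (by omega)
    refine (slope_le_slope_left_iff (c := ξ N) (hξ ?_ ?_ (by omega)) (hξ ?_ ?_ (by omega))).2
      ((hF k (by omega)).trans ih) <;> simp only [Set.mem_Iic] <;> omega

theorem slope_le_slope_of_adjacent (hξ : StrictMonoOn ξ (Set.Iic N))
    (hF : ∀ j, j + 2 ≤ N → slope F (ξ j) (ξ (j + 1)) ≤ slope F (ξ (j + 1)) (ξ (j + 2)))
    {k : ℕ} (hk : 0 < k) (hkN : k < N) :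
    slope F (ξ 0) (ξ k) ≤ slope F (ξ k) (ξ N) := by
  obtain ⟨k, rfl⟩ : ∃ k', k = k' + 1 := ⟨k - 1, by omega⟩
  calc slope F (ξ 0) (ξ (k + 1)) ≤ slope F (ξ k) (ξ (k + 1)) :=
        slope_zero_le_slope_of_adjacent hξ hF k hkN.le
    _ ≤ slope F (ξ (k + 1)) (ξ (k + 2)) := hF k (by omega)
    _ ≤ slope F (ξ (k + 1)) (ξ N) :=
        slope_le_slope_last_of_adjacent hξ hF (N - k - 2) _ (by omega)

end AdjacentSlopes

theorem ldd_nonneg_of_adjacent {f : ℝ → EReal} {ξ : ℕ → ℝ} {N : ℕ}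
    (hξ : StrictMonoOn ξ (Set.Iic N))
    (hf : ∀ j, j + 2 ≤ N → 0 ≤ ldd f (ξ j) (ξ (j + 1)) (ξ (j + 2)))
    {k : ℕ} (hk : 0 < k) (hkN : k < N) : 0 ≤ ldd f (ξ 0) (ξ k) (ξ N) := by
  have hlt {p q : ℕ} (hpq : p < q) (hq : q ≤ N) : ξ p < ξ q :=
    hξ (Set.mem_Iic.2 (by omega)) (Set.mem_Iic.2 hq) hpq
  have hadj j (hj : j + 2 ≤ N) := (ldd_nonneg_iff_s18 (hlt (by omega) (by omega))
    (hlt (by omega) hj)).1 (hf j hj)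
  obtain rfl | hN := (show N = 2 ∨ 3 ≤ N by omega)
  · obtain rfl : k = 1 := by omega
    exact hf 0 le_rfl
  -- for `N ≥ 3` every node is an endpoint of some adjacent triple
  have hbot : ∀ j ≤ N, f (ξ j) ≠ ⊥ := by
    intro j hj
    by_cases hj2 : j + 2 ≤ N
    · exact (hadj j hj2).1
    · simpa [show j - 2 + 2 = j by omega] using (hadj (j - 2) (by omega)).2.1
  have htop : ∀ j, 0 < j → j < N → f (ξ j) ≠ ⊤ := fun j hj hjN => by
    simpa [show j - 1 + 1 = j by omega] using (hadj (j - 1) (by omega)).2.2.1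
  rw [ldd_nonneg_iff_s18 (hlt hk hkN.le) (hlt hkN le_rfl)]
  refine ⟨hbot 0 (by omega), hbot N le_rfl, htop k hk hkN, ?_⟩
  by_cases h0 : f (ξ 0) = ⊤
  · exact Or.inl h0
  by_cases hN' : f (ξ N) = ⊤
  · exact Or.inr (Or.inl hN')
  have htop' : ∀ j ≤ N, f (ξ j) ≠ ⊤ := by
    intro j hj
    rcases Nat.eq_zero_or_pos j with rfl | hj0
    · exact h0
    rcases hj.lt_or_eq with hjN | rfl
    · exact htop j hj0 hjN
    · exact hN'
  refine Or.inr (Or.inr (Or.inr (slope_le_slope_of_adjacent hξ (fun j hj => ?_) hk hkN)))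
  obtain ⟨-, -, -, h | h | h | h⟩ := hadj j hj
  · exact absurd h (htop' j (by omega))
  · exact absurd h (htop' (j + 2) hj)
  · exact absurd h (hbot (j + 1) (by omega))
  · exact h

noncomputable def oddsProd (s : ℕ → ℝ) (j : ℕ) : ℝ := ∏ k ∈ Finset.range j, s k / (1 - s k)

noncomputable def tailWeight (s : ℕ → ℝ) (n i : ℕ) : ℝ :=
  (∑ j ∈ Finset.Icc i n, oddsProd s j) / ∑ j ∈ Finset.range (n + 1), oddsProd s j

section TailWeight

variable {s : ℕ → ℝ} {n : ℕ}

theorem oddsProd_pos {j : ℕ} (hs : ∀ k < j, s k ∈ Set.Ioo (0 : ℝ) 1) : 0 < oddsProd s j :=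
  Finset.prod_pos fun k hk => by
    obtain ⟨h0, h1⟩ := hs k (Finset.mem_range.1 hk)
    exact div_pos h0 (sub_pos.2 h1)

theorem sum_oddsProd_pos (hs : ∀ i < n, s i ∈ Set.Ioo (0 : ℝ) 1) :
    0 < ∑ j ∈ Finset.range (n + 1), oddsProd s j :=
  Finset.sum_pos (fun j hj => oddsProd_pos fun k hk => hs k (by rw [Finset.mem_range] at hj; omega))
    ⟨0, by simp⟩

theorem tailWeight_sub_succ {j : ℕ} (hj : j ≤ n) :
    tailWeight s n j - tailWeight s n (j + 1) =
      oddsProd s j / ∑ j ∈ Finset.range (n + 1), oddsProd s j := by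
  rw [tailWeight, tailWeight, div_sub_div_same, Finset.Icc_add_one_left_eq_Ioc,
    ← Finset.add_sum_Ioc_eq_sum_Icc hj, add_sub_cancel_right]

theorem tailWeight_succ_eq {j : ℕ} (hj : j < n) (hsj : s j ≠ 1) :
    tailWeight s n (j + 1) = s j * tailWeight s n j + (1 - s j) * tailWeight s n (j + 2) := by
  have hodds : s j * oddsProd s j = (1 - s j) * oddsProd s (j + 1) := by
    rw [oddsProd, oddsProd, Finset.prod_range_succ]
    field_simp [sub_ne_zero.2 hsj.symm]
  have key : s j * (tailWeight s n j - tailWeight s n (j + 1)) =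
      (1 - s j) * (tailWeight s n (j + 1) - tailWeight s n (j + 2)) := by
    rw [tailWeight_sub_succ hj.le, tailWeight_sub_succ hj, mul_div_assoc', mul_div_assoc', hodds]
  linear_combination -key

theorem tailWeight_zero (hs : ∀ i < n, s i ∈ Set.Ioo (0 : ℝ) 1) : tailWeight s n 0 = 1 := by
  rw [tailWeight, ← Nat.range_succ_eq_Icc_zero, div_self (sum_oddsProd_pos hs).ne']

theorem tailWeight_succ_self : tailWeight s n (n + 1) = 0 := by
  simp [tailWeight]

theorem tailWeight_strictAntiOn (hs : ∀ i < n, s i ∈ Set.Ioo (0 : ℝ) 1) :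
    StrictAntiOn (tailWeight s n) (Set.Iic (n + 1)) :=
  strictAntiOn_Iic_of_succ_lt fun j hj => by
    rw [Order.succ_eq_add_one, ← sub_pos, tailWeight_sub_succ (Nat.lt_succ_iff.1 hj)]
    exact div_pos (oddsProd_pos fun k hk => hs k (by omega)) (sum_oddsProd_pos hs)

end TailWeight

def IsWeightedQuasiArithMeanOn (I : Set ℝ) (h : ℝ → ℝ) (t : ℝ) (M : ℝ → ℝ → ℝ) : Prop :=
  ∀ x ∈ I, ∀ y ∈ I, x ≤ y → M x y ∈ I ∧ h (M x y) = t * h x + (1 - t) * h y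

theorem IsWeightedQuasiArithMeanOn.apply_eq {I : Set ℝ} {h : ℝ → ℝ} {t : ℝ} {M : ℝ → ℝ → ℝ}
    (hM : IsWeightedQuasiArithMeanOn I h t M) (hh : Set.InjOn h I) {a b c : ℝ} (ha : a ∈ I)
    (hb : b ∈ I) (hc : c ∈ I) (hac : a ≤ c) (hb' : h b = t * h a + (1 - t) * h c) :
    M a c = b :=
  hh (hM a ha c hc hac).1 hb ((hM a ha c hc hac).2.trans hb'.symm)

theorem exists_nodes_of_isWeightedQuasiArithMeanOn {I : Set ℝ} {h : ℝ → ℝ} {n : ℕ}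
    {w : ℕ → ℝ} {M : ℕ → ℝ → ℝ → ℝ} (hw₀ : w 0 = 1) (hw : w (n + 1) = 0)
    (hM : ∀ i < n, IsWeightedQuasiArithMeanOn I h (w (i + 1)) (M i))
    {x y : ℝ} (hx : x ∈ I) (hy : y ∈ I) (hxy : x ≤ y) :
    ∃ ξ : ℕ → ℝ, ξ 0 = x ∧ ξ (n + 1) = y ∧ (∀ i < n, ξ (i + 1) = M i x y) ∧
      ∀ j ≤ n + 1, ξ j ∈ I ∧ h (ξ j) = w j * h x + (1 - w j) * h y := by
  refine ⟨fun j => if j = 0 then x else if j = n + 1 then y else M (j - 1) x y, by simp,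
    by simp, fun i hi => by simp [show i ≠ n by omega], fun j hj => ?_⟩
  rcases Nat.eq_zero_or_pos j with rfl | hj0
  · simp [hx, hw₀]
  rcases hj.lt_or_eq with hjn | rfl
  · obtain ⟨i, rfl⟩ : ∃ i, j = i + 1 := ⟨j - 1, by omega⟩
    simpa [show i ≠ n by omega] using hM i (by omega) x hx y hy hxy
  · simp [hy, hw]

theorem stmt18_general (I : Set ℝ)
    (f : ℝ → EReal) (n : ℕ)
    (s : ℕ → ℝ) (hs : ∀ i < n, s i ∈ Set.Ioo (0 : ℝ) 1)
    (h : ℝ → ℝ) (hmono : StrictMonoOn h I)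
    (Ms : ℕ → ℝ → ℝ → ℝ)
    (hMs : ∀ i < n, ∀ x ∈ I, ∀ y ∈ I, x ≤ y →
      Ms i x y ∈ I ∧ h (Ms i x y) = s i * h x + (1 - s i) * h y)
    (σ : ℕ → ℝ)
    (hσ : ∀ i, σ i =
      (∑ j ∈ Finset.Icc i n, ∏ k ∈ Finset.range j, s k / (1 - s k)) /
      (∑ j ∈ Finset.range (n + 1), ∏ k ∈ Finset.range j, s k / (1 - s k)))
    (Mσ : ℕ → ℝ → ℝ → ℝ)
    (hMσ : ∀ i < n, ∀ x ∈ I, ∀ y ∈ I, x ≤ y →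
      Mσ i x y ∈ I ∧ h (Mσ i x y) = σ (i + 1) * h x + (1 - σ (i + 1)) * h y)
    (hconv : ∀ i < n, LowerConvexWrt I (Ms i) f) :
    ∀ i < n, LowerConvexWrt I (Mσ i) f := by
  obtain rfl : σ = tailWeight s n := funext hσ
  intro i hi x hx y hy hxy
  obtain ⟨ξ, hξ₀, hξN, hξM, hξ⟩ := exists_nodes_of_isWeightedQuasiArithMeanOn
    (tailWeight_zero hs) tailWeight_succ_self hMσ hx hy hxy.le
  have hξmono : StrictMonoOn ξ (Set.Iic (n + 1)) := fun p hp q hq hpq => by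
    refine (hmono.lt_iff_lt (hξ p hp).1 (hξ q hq).1).1 ?_
    rw [(hξ p hp).2, (hξ q hq).2]
    nlinarith [tailWeight_strictAntiOn hs hp hq hpq, hmono hx hy hxy]
  have hadj : ∀ j, j + 2 ≤ n + 1 → 0 ≤ ldd f (ξ j) (ξ (j + 1)) (ξ (j + 2)) := by
    intro j hj
    have hlt : ξ j < ξ (j + 2) :=
      hξmono (Set.mem_Iic.2 (by omega)) (Set.mem_Iic.2 hj) (by omega)
    have hmid : Ms j (ξ j) (ξ (j + 2)) = ξ (j + 1) := by
      refine IsWeightedQuasiArithMeanOn.apply_eq (hMs j (by omega)) hmono.injOn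
        (hξ j (by omega)).1 (hξ (j + 1) (by omega)).1 (hξ (j + 2) hj).1 hlt.le ?_
      rw [(hξ j (by omega)).2, (hξ (j + 1) (by omega)).2, (hξ (j + 2) hj).2,
        tailWeight_succ_eq (by omega) (hs j (by omega)).2.ne]
      ring
    simpa [hmid] using hconv j (by omega) _ (hξ j (by omega)).1 _ (hξ (j + 2) hj).1 hlt
  simpa [hξ₀, hξN, hξM i hi] using
    ldd_nonneg_of_adjacent hξmono hadj (Nat.succ_pos i) (by omega : i + 1 < n + 1)

/-- If `f` is lower convex with respect to each weighted
quasi-arithmetic mean `M_{sᵢh,(1-sᵢ)h}` (here `Ms i`, `i = 0,…,n-1`, characterized by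
membership in `I` and `h (Ms i x y) = s i · h x + (1 - s i) · h y`, `s i` being the
paper's `s_{i+1}`), then `f` is lower convex with respect to each `M_{σᵢh,(1-σᵢ)h}`
(here `Mσ i`, using the weight `σ (i+1)` in the paper's indexing). -/
theorem stmt18 (I : Set ℝ) (hI : Set.OrdConnected I) (hne : I.Nonempty)
    (f : ℝ → EReal) (n : ℕ) (hn : 2 ≤ n)
    (s : ℕ → ℝ) (hs : ∀ i < n, s i ∈ Set.Ioo (0 : ℝ) 1)
    (h : ℝ → ℝ) (hmono : StrictMonoOn h I) (hcont : ContinuousOn h I)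
    (Ms : ℕ → ℝ → ℝ → ℝ)
    (hMs : ∀ i < n, ∀ x ∈ I, ∀ y ∈ I, x ≤ y →
      Ms i x y ∈ I ∧ h (Ms i x y) = s i * h x + (1 - s i) * h y)
    (σ : ℕ → ℝ)
    (hσ : ∀ i, σ i =
      (∑ j ∈ Finset.Icc i n, ∏ k ∈ Finset.range j, s k / (1 - s k)) /
      (∑ j ∈ Finset.range (n + 1), ∏ k ∈ Finset.range j, s k / (1 - s k)))
    (Mσ : ℕ → ℝ → ℝ → ℝ)
    (hMσ : ∀ i < n, ∀ x ∈ I, ∀ y ∈ I, x ≤ y →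
      Mσ i x y ∈ I ∧ h (Mσ i x y) = σ (i + 1) * h x + (1 - σ (i + 1)) * h y)
    (hconv : ∀ i < n, LowerConvexWrt I (Ms i) f) :
    ∀ i < n, LowerConvexWrt I (Mσ i) f :=
  stmt18_general I f n s hs h hmono Ms hMs σ hσ Mσ hMσ hconv
end

section
/- Let I ⊆ ℝ be a nonempty interval and f : I → ℝ̄, and let S be either A̲C_f or ĀC_f. Then: (1) if t, s₁, s₂ ∈ S with s₁ < s₂, then t·s₂ + (1−t)·s₁ ∈ S; (2) if t, s ∈ S, then t·s ∈ S and 1 − (1−t)(1−s) ∈ S; (3) if S is nonempty, then S is dense in the open interval (0,1). -/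
/-- The set `A̲C_f` of parameters `t ∈ (0,1)` for which `f` is lower `A_t`-convex. -/
def lowerAC (I : Set ℝ) (f : ℝ → EReal) : Set ℝ :=
  {t | t ∈ Set.Ioo (0 : ℝ) 1 ∧
    ∀ x ∈ I, ∀ y ∈ I, x < y → 0 ≤ ldd f x (t * x + (1 - t) * y) y}

/-- The set `ĀC_f` of parameters `t ∈ (0,1)` for which `f` is upper `A_t`-convex. -/
def upperAC (I : Set ℝ) (f : ℝ → EReal) : Set ℝ :=
  {t | t ∈ Set.Ioo (0 : ℝ) 1 ∧
    ∀ x ∈ I, ∀ y ∈ I, x < y → 0 ≤ udd f x (t * x + (1 - t) * y) y}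

namespace Stmt19Aux

lemma coe_mul_ne_bot_of_pos {c : ℝ} (hc : 0 < c) {a : EReal} (ha : a ≠ ⊥) :
    (c : EReal) * a ≠ ⊥ := by
  induction a using EReal.rec with
  | bot => exact absurd rfl ha
  | coe a => rw [← EReal.coe_mul]; exact EReal.coe_ne_bot _
  | top => simp [EReal.coe_mul_top_of_pos hc]

lemma chain3 {α β₁ β₂ γ : ℝ} (hα : 0 < α) (hα1 : α < 1)
    (hβ₁0 : 0 ≤ β₁) (hβ₁1 : β₁ ≤ 1) (hβ₂0 : 0 ≤ β₂) (hβ₂1 : β₂ ≤ 1)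
    (hγ : γ = α * β₂ + (1 - α) * β₁) (hγ0 : 0 < γ) (hγ1 : γ < 1)
    {a c u v d : EReal} (ha : a ≠ ⊥) (hc : c ≠ ⊥)
    (hu : u ≤ (β₁ : EReal) * a + ((1 - β₁ : ℝ) : EReal) * c)
    (hv : v ≤ (β₂ : EReal) * a + ((1 - β₂ : ℝ) : EReal) * c)
    (hd : d ≤ (α : EReal) * v + ((1 - α : ℝ) : EReal) * u) :
    d ≤ (γ : EReal) * a + ((1 - γ : ℝ) : EReal) * c := by
  induction a using EReal.rec with
  | bot => exact absurd rfl ha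
  | top =>
      rw [EReal.coe_mul_top_of_pos hγ0,
        EReal.top_add_of_ne_bot (coe_mul_ne_bot_of_pos (by linarith) hc)]
      exact le_top
  | coe a' =>
    induction c using EReal.rec with
    | bot => exact absurd rfl hc
    | top =>
        rw [EReal.coe_mul_top_of_pos (by linarith : (0:ℝ) < 1 - γ),
          EReal.add_top_of_ne_bot (coe_mul_ne_bot_of_pos hγ0 (EReal.coe_ne_bot _))]
        exact le_top
    | coe c' =>
      rw [← EReal.coe_mul, ← EReal.coe_mul, ← EReal.coe_add] at hu hv ⊢
      induction u using EReal.rec with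
      | top => exact absurd (top_le_iff.1 hu) (EReal.coe_ne_top _)
      | bot =>
          rw [EReal.coe_mul_bot_of_pos (by linarith : (0:ℝ) < 1 - α), EReal.add_bot] at hd
          exact le_trans hd bot_le
      | coe u' =>
        induction v using EReal.rec with
        | top => exact absurd (top_le_iff.1 hv) (EReal.coe_ne_top _)
        | bot =>
            rw [EReal.coe_mul_bot_of_pos hα, EReal.bot_add] at hd
            exact le_trans hd bot_le
        | coe v' =>
          rw [← EReal.coe_mul, ← EReal.coe_mul, ← EReal.coe_add] at hd
          refine le_trans hd (EReal.coe_le_coe_iff.2 ?_)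
          rw [EReal.coe_le_coe_iff] at hu hv
          subst hγ
          nlinarith [mul_le_mul_of_nonneg_left hu (by linarith : (0:ℝ) ≤ 1 - α),
            mul_le_mul_of_nonneg_left hv (le_of_lt hα)]

lemma lsum_core {A B C t : ℝ} (hA : 0 < A) (hB : B < 0) (hC : 0 < C)
    (ht : 0 < t) (ht1 : t < 1)
    (hrel : ∀ p q r : ℝ, 0 ≤ A*p + B*q + C*r ↔ q ≤ t*p + (1-t)*r)
    (p q r : EReal) :
    0 ≤ lsum (lsum ((A:EReal)*p) ((B:EReal)*q)) ((C:EReal)*r) ↔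
      (p ≠ ⊥ ∧ r ≠ ⊥ ∧ q ≠ ⊤ ∧ q ≤ (t:EReal)*p + ((1-t:ℝ):EReal)*r) := by
  induction p using EReal.rec <;> induction q using EReal.rec <;>
    induction r using EReal.rec <;>
    simp_all [lsum, EReal.coe_mul_top_of_pos hA, EReal.coe_mul_top_of_neg hB,
      EReal.coe_mul_top_of_pos hC, EReal.coe_mul_bot_of_pos hA,
      EReal.coe_mul_bot_of_neg hB, EReal.coe_mul_bot_of_pos hC,
      EReal.coe_mul_top_of_pos ht, EReal.coe_mul_top_of_pos (by linarith : (0:ℝ) < 1 - t),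
      EReal.coe_mul_bot_of_pos ht, EReal.coe_mul_bot_of_pos (by linarith : (0:ℝ) < 1 - t),
      ← EReal.coe_mul, ← EReal.coe_add, le_bot_iff] <;>
    norm_cast <;>
    first
      | (rw [EReal.coe_mul_top_of_pos (show (0:ℝ) < 1 - t by linarith)]
         first
           | (rw [EReal.coe_add_top]; exact le_top)
           | (rw [EReal.top_add_top]; exact le_top))
      | (rw [EReal.top_add_coe]; exact le_top)

lemma usum_core {A B C t : ℝ} (hA : 0 < A) (hB : B < 0) (hC : 0 < C)
    (ht : 0 < t) (ht1 : t < 1)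
    (hrel : ∀ p q r : ℝ, 0 ≤ A*p + B*q + C*r ↔ q ≤ t*p + (1-t)*r)
    (p q r : EReal) :
    0 ≤ usum (usum ((A:EReal)*p) ((B:EReal)*q)) ((C:EReal)*r) ↔
      (p = ⊤ ∨ r = ⊤ ∨ q = ⊥ ∨
        (p ≠ ⊥ ∧ r ≠ ⊥ ∧ q ≠ ⊤ ∧ q ≤ (t:EReal)*p + ((1-t:ℝ):EReal)*r)) := by
  induction p using EReal.rec <;> induction q using EReal.rec <;>
    induction r using EReal.rec <;>
    simp_all [usum, EReal.coe_mul_top_of_pos hA, EReal.coe_mul_top_of_neg hB,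
      EReal.coe_mul_top_of_pos hC, EReal.coe_mul_bot_of_pos hA,
      EReal.coe_mul_bot_of_neg hB, EReal.coe_mul_bot_of_pos hC,
      ← EReal.coe_mul, ← EReal.coe_add, le_bot_iff, le_top] <;>
    norm_cast

lemma coeffs {t x y : ℝ} (ht : 0 < t) (ht1 : t < 1) (hxy : x < y) :
    0 < 1 / ((t*x+(1-t)*y - x) * (y - x)) ∧
    1 / ((x - (t*x+(1-t)*y)) * (y - (t*x+(1-t)*y))) < 0 ∧
    0 < 1 / ((x - y) * (t*x+(1-t)*y - y)) ∧
    ∀ p q r : ℝ,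
      0 ≤ 1 / ((t*x+(1-t)*y - x) * (y - x)) * p
          + 1 / ((x - (t*x+(1-t)*y)) * (y - (t*x+(1-t)*y))) * q
          + 1 / ((x - y) * (t*x+(1-t)*y - y)) * r ↔ q ≤ t*p + (1-t)*r := by
  have hd : 0 < y - x := sub_pos.2 hxy
  have ht' : t ≠ 0 := ne_of_gt ht
  have h1t : 0 < 1 - t := by linarith
  have h1t' : (1:ℝ) - t ≠ 0 := ne_of_gt h1t
  have hd' : y - x ≠ 0 := ne_of_gt hd
  have e1 : (t*x+(1-t)*y - x) * (y - x) = (1-t)*(y-x)^2 := by ring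
  have e2 : (x - (t*x+(1-t)*y)) * (y - (t*x+(1-t)*y)) = -(t*(1-t)*(y-x)^2) := by ring
  have e3 : (x - y) * (t*x+(1-t)*y - y) = t*(y-x)^2 := by ring
  have hP : 0 < t*(1-t)*(y-x)^2 := by positivity
  refine ⟨by rw [e1]; positivity, ?_, by rw [e3]; positivity, ?_⟩
  · rw [e2]
    apply one_div_neg.2
    simp only [neg_neg, neg_lt_zero]
    linarith [hP]
  · intro p q r
    rw [e1, e2, e3]
    have key : (1/((1-t)*(y-x)^2) * p + 1/(-(t*(1-t)*(y-x)^2)) * q + 1/(t*(y-x)^2) * r)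
        * (t*(1-t)*(y-x)^2) = t*p - q + (1-t)*r := by
      field_simp
      ring
    constructor <;> intro h <;> nlinarith [key, hP]

/-- The basic convexity relation at parameter `t` for a pair `x < y`. -/
def R (f : ℝ → EReal) (t x y : ℝ) : Prop :=
  f x ≠ ⊥ ∧ f y ≠ ⊥ ∧ f (t * x + (1 - t) * y) ≠ ⊤ ∧
    f (t * x + (1 - t) * y) ≤ (t : EReal) * f x + ((1 - t : ℝ) : EReal) * f y

lemma ldd_nonneg_iff (f : ℝ → EReal) {t x y : ℝ} (ht : 0 < t) (ht1 : t < 1) (hxy : x < y) :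
    0 ≤ ldd f x (t * x + (1 - t) * y) y ↔ R f t x y := by
  obtain ⟨hA, hB, hC, hrel⟩ := coeffs ht ht1 hxy
  exact lsum_core hA hB hC ht ht1 hrel (f x) (f (t*x+(1-t)*y)) (f y)

lemma udd_nonneg_iff (f : ℝ → EReal) {t x y : ℝ} (ht : 0 < t) (ht1 : t < 1) (hxy : x < y) :
    0 ≤ udd f x (t * x + (1 - t) * y) y ↔
      (f x = ⊤ ∨ f y = ⊤ ∨ f (t * x + (1 - t) * y) = ⊥ ∨ R f t x y) := by
  obtain ⟨hA, hB, hC, hrel⟩ := coeffs ht ht1 hxy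
  exact usum_core hA hB hC ht ht1 hrel (f x) (f (t*x+(1-t)*y)) (f y)

lemma R_mul {f : ℝ → EReal} {t s x y : ℝ} (ht : 0 < t) (ht1 : t < 1)
    (hs : 0 < s) (hs1 : s < 1)
    (h1 : R f s x y) (h2 : R f t (s*x+(1-s)*y) y) : R f (t*s) x y := by
  obtain ⟨ha, hc, hm1, hle1⟩ := h1
  obtain ⟨hp, hc', hm2, hle2⟩ := h2
  have e : t * (s*x+(1-s)*y) + (1-t) * y = t*s * x + (1 - t*s) * y := by ring
  rw [e] at hm2 hle2
  have hu : f y ≤ ((0:ℝ) : EReal) * f x + ((1 - (0:ℝ) : ℝ) : EReal) * f y := by norm_num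
  exact ⟨ha, hc, hm2, chain3 ht ht1 le_rfl zero_le_one hs.le hs1.le (by ring)
    (mul_pos ht hs) (by nlinarith) ha hc hu hle1 hle2⟩

lemma R_dual {f : ℝ → EReal} {t s x y : ℝ} (ht : 0 < t) (ht1 : t < 1)
    (hs : 0 < s) (hs1 : s < 1)
    (h1 : R f s x y) (h2 : R f t x (s*x+(1-s)*y)) : R f (1 - (1-t)*(1-s)) x y := by
  obtain ⟨ha, hc, hm1, hle1⟩ := h1
  obtain ⟨ha', hp, hm2, hle2⟩ := h2
  have e : t * x + (1-t) * (s*x+(1-s)*y) = (1 - (1-t)*(1-s)) * x + (1 - (1 - (1-t)*(1-s))) * y := by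
    ring
  rw [e] at hm2 hle2
  have hv : f x ≤ ((1:ℝ) : EReal) * f x + ((1 - (1:ℝ) : ℝ) : EReal) * f y := by norm_num
  exact ⟨ha, hc, hm2, chain3 ht ht1 hs.le hs1.le zero_le_one le_rfl (by ring)
    (by nlinarith) (by nlinarith) ha hc hle1 hv hle2⟩

lemma R_op1 {f : ℝ → EReal} {t s₁ s₂ x y : ℝ} (ht : 0 < t) (ht1 : t < 1)
    (hs₁ : 0 < s₁) (hs₁1 : s₁ < 1) (hs₂ : 0 < s₂) (hs₂1 : s₂ < 1)
    (h1 : R f s₁ x y) (h2 : R f s₂ x y)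
    (h3 : R f t (s₂*x+(1-s₂)*y) (s₁*x+(1-s₁)*y)) : R f (t*s₂+(1-t)*s₁) x y := by
  obtain ⟨ha, hc, hm1, hle1⟩ := h1
  obtain ⟨ha', hc', hm2, hle2⟩ := h2
  obtain ⟨hp2, hp1, hm3, hle3⟩ := h3
  have e : t * (s₂*x+(1-s₂)*y) + (1-t) * (s₁*x+(1-s₁)*y)
      = (t*s₂+(1-t)*s₁) * x + (1 - (t*s₂+(1-t)*s₁)) * y := by ring
  rw [e] at hm3 hle3
  exact ⟨ha, hc, hm3, chain3 ht ht1 hs₁.le hs₁1.le hs₂.le hs₂1.le rfl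
    (by nlinarith) (by nlinarith) ha hc hle1 hle2 hle3⟩

variable {I : Set ℝ} {f : ℝ → EReal}

lemma lower_mem_iff {t : ℝ} : t ∈ lowerAC I f ↔
    (t ∈ Set.Ioo (0:ℝ) 1 ∧ ∀ x ∈ I, ∀ y ∈ I, x < y → R f t x y) := by
  constructor
  · rintro ⟨h0, h⟩
    exact ⟨h0, fun x hx y hy hxy => (ldd_nonneg_iff f h0.1 h0.2 hxy).1 (h x hx y hy hxy)⟩
  · rintro ⟨h0, h⟩
    exact ⟨h0, fun x hx y hy hxy => (ldd_nonneg_iff f h0.1 h0.2 hxy).2 (h x hx y hy hxy)⟩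

lemma upper_mem_iff {t : ℝ} : t ∈ upperAC I f ↔
    (t ∈ Set.Ioo (0:ℝ) 1 ∧ ∀ x ∈ I, ∀ y ∈ I, x < y →
      (f x = ⊤ ∨ f y = ⊤ ∨ f (t * x + (1 - t) * y) = ⊥ ∨ R f t x y)) := by
  constructor
  · rintro ⟨h0, h⟩
    exact ⟨h0, fun x hx y hy hxy => (udd_nonneg_iff f h0.1 h0.2 hxy).1 (h x hx y hy hxy)⟩
  · rintro ⟨h0, h⟩
    exact ⟨h0, fun x hx y hy hxy => (udd_nonneg_iff f h0.1 h0.2 hxy).2 (h x hx y hy hxy)⟩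

lemma lowerAC_mul (hI : Set.OrdConnected I) {t s : ℝ}
    (ht : t ∈ lowerAC I f) (hs : s ∈ lowerAC I f) : t * s ∈ lowerAC I f := by
  rw [lower_mem_iff] at ht hs ⊢
  obtain ⟨⟨ht0, ht1⟩, hT⟩ := ht
  obtain ⟨⟨hs0, hs1⟩, hS⟩ := hs
  refine ⟨⟨mul_pos ht0 hs0, by nlinarith⟩, fun x hx y hy hxy => ?_⟩
  have hxp : x < s*x+(1-s)*y := by nlinarith
  have hpy : s*x+(1-s)*y < y := by nlinarith
  have hpI : s*x+(1-s)*y ∈ I := hI.out hx hy ⟨hxp.le, hpy.le⟩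
  exact R_mul ht0 ht1 hs0 hs1 (hS x hx y hy hxy) (hT _ hpI y hy hpy)

lemma lowerAC_dual (hI : Set.OrdConnected I) {t s : ℝ}
    (ht : t ∈ lowerAC I f) (hs : s ∈ lowerAC I f) : 1 - (1-t)*(1-s) ∈ lowerAC I f := by
  rw [lower_mem_iff] at ht hs ⊢
  obtain ⟨⟨ht0, ht1⟩, hT⟩ := ht
  obtain ⟨⟨hs0, hs1⟩, hS⟩ := hs
  refine ⟨⟨by nlinarith, by nlinarith⟩, fun x hx y hy hxy => ?_⟩
  have hxp : x < s*x+(1-s)*y := by nlinarith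
  have hpy : s*x+(1-s)*y < y := by nlinarith
  have hpI : s*x+(1-s)*y ∈ I := hI.out hx hy ⟨hxp.le, hpy.le⟩
  exact R_dual ht0 ht1 hs0 hs1 (hS x hx y hy hxy) (hT x hx _ hpI hxp)

lemma lowerAC_op1 (hI : Set.OrdConnected I) {t s₁ s₂ : ℝ}
    (ht : t ∈ lowerAC I f) (hs₁ : s₁ ∈ lowerAC I f) (hs₂ : s₂ ∈ lowerAC I f)
    (h12 : s₁ < s₂) : t*s₂ + (1-t)*s₁ ∈ lowerAC I f := by
  rw [lower_mem_iff] at ht hs₁ hs₂ ⊢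
  obtain ⟨⟨ht0, ht1⟩, hT⟩ := ht
  obtain ⟨⟨hs10, hs11⟩, hS1⟩ := hs₁
  obtain ⟨⟨hs20, hs21⟩, hS2⟩ := hs₂
  refine ⟨⟨by nlinarith, by nlinarith⟩, fun x hx y hy hxy => ?_⟩
  have hxp1 : x < s₁*x+(1-s₁)*y := by nlinarith
  have hp1y : s₁*x+(1-s₁)*y < y := by nlinarith
  have hxp2 : x < s₂*x+(1-s₂)*y := by nlinarith
  have hp2y : s₂*x+(1-s₂)*y < y := by nlinarith
  have hp21 : s₂*x+(1-s₂)*y < s₁*x+(1-s₁)*y := by nlinarith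
  have hp1I : s₁*x+(1-s₁)*y ∈ I := hI.out hx hy ⟨hxp1.le, hp1y.le⟩
  have hp2I : s₂*x+(1-s₂)*y ∈ I := hI.out hx hy ⟨hxp2.le, hp2y.le⟩
  exact R_op1 ht0 ht1 hs10 hs11 hs20 hs21 (hS1 x hx y hy hxy) (hS2 x hx y hy hxy)
    (hT _ hp2I _ hp1I hp21)

lemma upperAC_mul (hI : Set.OrdConnected I) {t s : ℝ}
    (ht : t ∈ upperAC I f) (hs : s ∈ upperAC I f) : t * s ∈ upperAC I f := by
  rw [upper_mem_iff] at ht hs ⊢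
  obtain ⟨⟨ht0, ht1⟩, hT⟩ := ht
  obtain ⟨⟨hs0, hs1⟩, hS⟩ := hs
  refine ⟨⟨mul_pos ht0 hs0, by nlinarith⟩, fun x hx y hy hxy => ?_⟩
  by_cases hxT : f x = ⊤
  · exact Or.inl hxT
  by_cases hyT : f y = ⊤
  · exact Or.inr (Or.inl hyT)
  by_cases hqB : f (t*s * x + (1 - t*s) * y) = ⊥
  · exact Or.inr (Or.inr (Or.inl hqB))
  have hxp : x < s*x+(1-s)*y := by nlinarith
  have hpy : s*x+(1-s)*y < y := by nlinarith
  have hpI : s*x+(1-s)*y ∈ I := hI.out hx hy ⟨hxp.le, hpy.le⟩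
  have h1 := hS x hx y hy hxy
  have h2 := hT _ hpI y hy hpy
  have hqB' : f (t * (s*x+(1-s)*y) + (1-t) * y) ≠ ⊥ := by
    rw [show t * (s*x+(1-s)*y) + (1-t) * y = t*s * x + (1 - t*s) * y from by ring]
    exact hqB
  have hpB : f (s*x+(1-s)*y) ≠ ⊥ := by
    intro hbot
    rcases h2 with h | h | h | h
    · exact absurd (hbot.symm.trans h) bot_ne_top
    · exact hyT h
    · exact hqB' h
    · exact h.1 hbot
  have hR1 : R f s x y := by
    rcases h1 with h | h | h | h
    exacts [absurd h hxT, absurd h hyT, absurd h hpB, h]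
  have hR2 : R f t (s*x+(1-s)*y) y := by
    rcases h2 with h | h | h | h
    exacts [absurd h hR1.2.2.1, absurd h hyT, absurd h hqB', h]
  exact Or.inr (Or.inr (Or.inr (R_mul ht0 ht1 hs0 hs1 hR1 hR2)))

lemma upperAC_dual (hI : Set.OrdConnected I) {t s : ℝ}
    (ht : t ∈ upperAC I f) (hs : s ∈ upperAC I f) : 1 - (1-t)*(1-s) ∈ upperAC I f := by
  rw [upper_mem_iff] at ht hs ⊢
  obtain ⟨⟨ht0, ht1⟩, hT⟩ := ht
  obtain ⟨⟨hs0, hs1⟩, hS⟩ := hs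
  refine ⟨⟨by nlinarith, by nlinarith⟩, fun x hx y hy hxy => ?_⟩
  by_cases hxT : f x = ⊤
  · exact Or.inl hxT
  by_cases hyT : f y = ⊤
  · exact Or.inr (Or.inl hyT)
  by_cases hqB : f ((1 - (1-t)*(1-s)) * x + (1 - (1 - (1-t)*(1-s))) * y) = ⊥
  · exact Or.inr (Or.inr (Or.inl hqB))
  have hxp : x < s*x+(1-s)*y := by nlinarith
  have hpy : s*x+(1-s)*y < y := by nlinarith
  have hpI : s*x+(1-s)*y ∈ I := hI.out hx hy ⟨hxp.le, hpy.le⟩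
  have h1 := hS x hx y hy hxy
  have h2 := hT x hx _ hpI hxp
  have hqB' : f (t * x + (1-t) * (s*x+(1-s)*y)) ≠ ⊥ := by
    rw [show t * x + (1-t) * (s*x+(1-s)*y)
        = (1 - (1-t)*(1-s)) * x + (1 - (1 - (1-t)*(1-s))) * y from by ring]
    exact hqB
  have hpB : f (s*x+(1-s)*y) ≠ ⊥ := by
    intro hbot
    rcases h2 with h | h | h | h
    · exact hxT h
    · exact absurd (hbot.symm.trans h) bot_ne_top
    · exact hqB' h
    · exact h.2.1 hbot
  have hR1 : R f s x y := by
    rcases h1 with h | h | h | h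
    exacts [absurd h hxT, absurd h hyT, absurd h hpB, h]
  have hR2 : R f t x (s*x+(1-s)*y) := by
    rcases h2 with h | h | h | h
    exacts [absurd h hxT, absurd h hR1.2.2.1, absurd h hqB', h]
  exact Or.inr (Or.inr (Or.inr (R_dual ht0 ht1 hs0 hs1 hR1 hR2)))

lemma upperAC_op1 (hI : Set.OrdConnected I) {t s₁ s₂ : ℝ}
    (ht : t ∈ upperAC I f) (hs₁ : s₁ ∈ upperAC I f) (hs₂ : s₂ ∈ upperAC I f)
    (h12 : s₁ < s₂) : t*s₂ + (1-t)*s₁ ∈ upperAC I f := by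
  rw [upper_mem_iff] at ht hs₁ hs₂ ⊢
  obtain ⟨⟨ht0, ht1⟩, hT⟩ := ht
  obtain ⟨⟨hs10, hs11⟩, hS1⟩ := hs₁
  obtain ⟨⟨hs20, hs21⟩, hS2⟩ := hs₂
  refine ⟨⟨by nlinarith, by nlinarith⟩, fun x hx y hy hxy => ?_⟩
  by_cases hxT : f x = ⊤
  · exact Or.inl hxT
  by_cases hyT : f y = ⊤
  · exact Or.inr (Or.inl hyT)
  by_cases hqB : f ((t*s₂ + (1-t)*s₁) * x + (1 - (t*s₂ + (1-t)*s₁)) * y) = ⊥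
  · exact Or.inr (Or.inr (Or.inl hqB))
  have hxp1 : x < s₁*x+(1-s₁)*y := by nlinarith
  have hp1y : s₁*x+(1-s₁)*y < y := by nlinarith
  have hxp2 : x < s₂*x+(1-s₂)*y := by nlinarith
  have hp2y : s₂*x+(1-s₂)*y < y := by nlinarith
  have hp21 : s₂*x+(1-s₂)*y < s₁*x+(1-s₁)*y := by nlinarith
  have hp1I : s₁*x+(1-s₁)*y ∈ I := hI.out hx hy ⟨hxp1.le, hp1y.le⟩
  have hp2I : s₂*x+(1-s₂)*y ∈ I := hI.out hx hy ⟨hxp2.le, hp2y.le⟩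
  have h1 := hS1 x hx y hy hxy
  have h2 := hS2 x hx y hy hxy
  have h3 := hT _ hp2I _ hp1I hp21
  have hqB' : f (t * (s₂*x+(1-s₂)*y) + (1-t) * (s₁*x+(1-s₁)*y)) ≠ ⊥ := by
    rw [show t * (s₂*x+(1-s₂)*y) + (1-t) * (s₁*x+(1-s₁)*y)
        = (t*s₂ + (1-t)*s₁) * x + (1 - (t*s₂ + (1-t)*s₁)) * y from by ring]
    exact hqB
  have hp2T : f (s₂*x+(1-s₂)*y) ≠ ⊤ := by
    intro htop
    rcases h2 with h | h | h | h
    exacts [hxT h, hyT h, absurd (h.symm.trans htop) bot_ne_top, h.2.2.1 htop]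
  have hp1T : f (s₁*x+(1-s₁)*y) ≠ ⊤ := by
    intro htop
    rcases h1 with h | h | h | h
    exacts [hxT h, hyT h, absurd (h.symm.trans htop) bot_ne_top, h.2.2.1 htop]
  have hR3 : R f t (s₂*x+(1-s₂)*y) (s₁*x+(1-s₁)*y) := by
    rcases h3 with h | h | h | h
    exacts [absurd h hp2T, absurd h hp1T, absurd h hqB', h]
  have hR1 : R f s₁ x y := by
    rcases h1 with h | h | h | h
    exacts [absurd h hxT, absurd h hyT, absurd h hR3.2.1, h]
  have hR2 : R f s₂ x y := by
    rcases h2 with h | h | h | h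
    exacts [absurd h hxT, absurd h hyT, absurd h hR3.1, h]
  exact Or.inr (Or.inr (Or.inr (R_op1 ht0 ht1 hs10 hs11 hs20 hs21 hR1 hR2 hR3)))

lemma dense_of_closed_ops {S : Set ℝ} (hsub : S ⊆ Set.Ioo 0 1)
    (hmul : ∀ t ∈ S, ∀ s ∈ S, t * s ∈ S)
    (hdual : ∀ t ∈ S, ∀ s ∈ S, 1 - (1-t)*(1-s) ∈ S)
    (hne : S.Nonempty) : Set.Ioo (0:ℝ) 1 ⊆ closure S := by
  obtain ⟨t₀, ht₀⟩ := hne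
  obtain ⟨ht₀0, ht₀1⟩ := hsub ht₀
  have hpow : ∀ n : ℕ, t₀^(n+1) ∈ S := by
    intro n
    induction n with
    | zero => simpa using ht₀
    | succ n ih =>
        rw [pow_succ']
        exact hmul t₀ ht₀ _ ih
  have htend : Filter.Tendsto (fun n : ℕ => t₀^n) Filter.atTop (nhds 0) :=
    tendsto_pow_atTop_nhds_zero_of_lt_one ht₀0.le ht₀1
  have hsmall : ∀ δ : ℝ, 0 < δ → ∃ n : ℕ, t₀^(n+1) < δ := by
    intro δ hδ
    obtain ⟨N, hN⟩ := Filter.eventually_atTop.1 (htend.eventually (gt_mem_nhds hδ))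
    exact ⟨N, hN (N+1) (by omega)⟩
  rintro a ⟨ha0, ha1⟩
  set C := closure S ∩ Set.Icc 0 a with hC
  have hCc : IsClosed C := isClosed_closure.inter isClosed_Icc
  have hCne : C.Nonempty := by
    obtain ⟨n, hn⟩ := hsmall a ha0
    exact ⟨t₀^(n+1), subset_closure (hpow n), (pow_pos ht₀0 _).le, hn.le⟩
  have hCb : BddAbove C := ⟨a, fun z hz => hz.2.2⟩
  have huC : sSup C ∈ C := hCc.csSup_mem hCne hCb
  obtain ⟨hucl, hu0, hua⟩ : sSup C ∈ closure S ∧ 0 ≤ sSup C ∧ sSup C ≤ a :=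
    ⟨huC.1, huC.2.1, huC.2.2⟩
  rcases eq_or_lt_of_le hua with heq | hlt
  · exact heq ▸ hucl
  · exfalso
    set u := sSup C
    have hu1 : u < 1 := lt_trans hlt ha1
    obtain ⟨n, hn⟩ := hsmall ((a - u)/(1 - u)) (div_pos (by linarith) (by linarith))
    set c := t₀^(n+1) with hc
    have hc0 : 0 < c := pow_pos ht₀0 _
    have hcS : c ∈ S := hpow n
    have hmap : 1 - (1-c)*(1-u) ∈ closure S := by
      have hmt : Set.MapsTo (fun z => 1 - (1-c)*(1-z)) S S := fun z hz => hdual c hcS z hz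
      exact hmt.closure (by continuity) hucl
    have hcu : c * (1 - u) < a - u := (lt_div_iff₀ (by linarith)).1 hn
    have hmem : 1 - (1-c)*(1-u) ∈ C :=
      ⟨hmap, by nlinarith, by nlinarith⟩
    have hle : 1 - (1-c)*(1-u) ≤ u := le_csSup hCb hmem
    nlinarith

end Stmt19Aux

open Stmt19Aux in
/-- For `S ∈ {A̲C_f, ĀC_f}`: (1) if `t, s₁, s₂ ∈ S`, `s₁ < s₂`, then
`t·s₂ + (1-t)·s₁ ∈ S`; (2) if `t, s ∈ S` then `t·s ∈ S` and `1-(1-t)(1-s) ∈ S`;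
(3) if `S ≠ ∅` then `S` is dense in `(0,1)`. -/
theorem stmt19 (I : Set ℝ) (hI : Set.OrdConnected I) (hne : I.Nonempty)
    (f : ℝ → EReal) (S : Set ℝ)
    (hS : S = lowerAC I f ∨ S = upperAC I f) :
    (∀ t ∈ S, ∀ s₁ ∈ S, ∀ s₂ ∈ S, s₁ < s₂ → t * s₂ + (1 - t) * s₁ ∈ S) ∧
    (∀ t ∈ S, ∀ s ∈ S, t * s ∈ S ∧ 1 - (1 - t) * (1 - s) ∈ S) ∧
    (S.Nonempty → Set.Ioo (0 : ℝ) 1 ⊆ closure S) := by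
  rcases hS with rfl | rfl
  · refine ⟨fun t ht s₁ hs₁ s₂ hs₂ h12 => lowerAC_op1 hI ht hs₁ hs₂ h12,
      fun t ht s hs => ⟨lowerAC_mul hI ht hs, lowerAC_dual hI ht hs⟩, fun hne' => ?_⟩
    exact dense_of_closed_ops (fun u hu => (lower_mem_iff.1 hu).1)
      (fun t ht s hs => lowerAC_mul hI ht hs)
      (fun t ht s hs => lowerAC_dual hI ht hs) hne'
  · refine ⟨fun t ht s₁ hs₁ s₂ hs₂ h12 => upperAC_op1 hI ht hs₁ hs₂ h12,
      fun t ht s hs => ⟨upperAC_mul hI ht hs, upperAC_dual hI ht hs⟩, fun hne' => ?_⟩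
    exact dense_of_closed_ops (fun u hu => (upper_mem_iff.1 hu).1)
      (fun t ht s hs => upperAC_mul hI ht hs)
      (fun t ht s hs => upperAC_dual hI ht hs) hne'
end
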